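/- arXiv:2510.08438 — 5 statements merged into one kernel-verified Lean document; each statement's English description precedes it below -/
import Mathlib

section
/- (Inverse-probability-of-censoring weighting identity, Web Appendix B.) For all real numbers c ≥ 0 and t ≥ 0 with c ≠ t, the integral of the compensated censoring jump against the inverse survival weight telescopes: 1{c ≤ t}/K(c) − ∫_0^{min(c,t)} λ(u)/K(u) du = 1 − 1{c ≥ t}/K(t). -/
/-! Since `λ / K = -K' / K² = (1 / K)'`, the integral up to `min c t` telescopes to
`1 / K (min c t) - 1 / K 0`; the indicators then pick out the same endpoint on both sides. -/

open MeasureTheory Set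

theorem integral_neg_deriv_div_sq_eq_inv_sub_inv {K K' : ℝ → ℝ} {a b : ℝ} (hab : a ≤ b)
    (hK : ∀ u ∈ Icc a b, HasDerivWithinAt K (K' u) (Icc a b) u)
    (hK' : ContinuousOn K' (Icc a b)) (hne : ∀ u ∈ Icc a b, K u ≠ 0) :
    ∫ u in a..b, -K' u / K u ^ 2 = (K b)⁻¹ - (K a)⁻¹ := by
  have hKcont : ContinuousOn K (Icc a b) := fun u hu => (hK u hu).continuousWithinAt
  have hderiv : ∀ u ∈ Ioo a b, HasDerivAt (fun u => (K u)⁻¹) (-K' u / K u ^ 2) u := fun u hu =>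
    ((hK u (Ioo_subset_Icc_self hu)).hasDerivAt (Icc_mem_nhds hu.1 hu.2)).inv
      (hne u (Ioo_subset_Icc_self hu))
  have hint : IntervalIntegrable (fun u => -K' u / K u ^ 2) volume a b := by
    refine ContinuousOn.intervalIntegrable ?_
    rw [uIcc_of_le hab]
    exact hK'.neg.div (hKcont.pow 2) fun u hu => pow_ne_zero 2 (hne u hu)
  exact intervalIntegral.integral_eq_sub_of_hasDerivAt_of_le hab (hKcont.inv₀ hne) hderiv hint

theorem integral_hazard_div_survival_eq {K K' lam : ℝ → ℝ} (hK0 : K 0 = 1)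
    (hKpos : ∀ u : ℝ, 0 ≤ u → 0 < K u)
    (hK' : ∀ u ∈ Ici (0:ℝ), HasDerivWithinAt K (K' u) (Ici 0) u)
    (hK'cont : ContinuousOn K' (Ici 0)) (hlam : ∀ u : ℝ, lam u = -K' u / K u)
    {m : ℝ} (hm : 0 ≤ m) :
    ∫ u in (0:ℝ)..m, lam u / K u = 1 / K m - 1 := by
  have hsub : Icc (0:ℝ) m ⊆ Ici 0 := Icc_subset_Ici_self
  have hK'Icc : ∀ u ∈ Icc (0:ℝ) m, HasDerivWithinAt K (K' u) (Icc 0 m) u := fun u hu =>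
    (hK' u (hsub hu)).mono hsub
  calc ∫ u in (0:ℝ)..m, lam u / K u = ∫ u in (0:ℝ)..m, -K' u / K u ^ 2 :=
        intervalIntegral.integral_congr fun u _ => by rw [hlam u, div_div, sq]
    _ = (K m)⁻¹ - (K 0)⁻¹ := integral_neg_deriv_div_sq_eq_inv_sub_inv hm hK'Icc
        (hK'cont.mono hsub) fun u hu => (hKpos u hu.1).ne'
    _ = 1 / K m - 1 := by rw [hK0, one_div, inv_one]

/-- **Inverse-probability-of-censoring weighting identity (Web Appendix B).**
Let `K` be continuously differentiable on `[0, ∞)` with `K 0 = 1` and `K > 0` on `[0, ∞)`,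
with hazard `λ u = -K' u / K u`.  Then for all `c ≥ 0`, `t ≥ 0` with `c ≠ t`,
`1{c ≤ t}/K(c) − ∫_0^{min(c,t)} λ(u)/K(u) du = 1 − 1{c ≥ t}/K(t)`. -/
theorem ipcw_telescoping_identity
    (K K' : ℝ → ℝ) (hK0 : K 0 = 1) (hKpos : ∀ u : ℝ, 0 ≤ u → 0 < K u)
    (hK' : ∀ u ∈ Set.Ici (0:ℝ), HasDerivWithinAt K (K' u) (Set.Ici 0) u)
    (hK'cont : ContinuousOn K' (Set.Ici 0))
    (lam : ℝ → ℝ) (hlam : ∀ u : ℝ, lam u = -K' u / K u) :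
    ∀ c t : ℝ, 0 ≤ c → 0 ≤ t → c ≠ t →
      (if c ≤ t then 1 / K c else 0) - (∫ u in (0:ℝ)..(min c t), lam u / K u)
        = 1 - (if t ≤ c then 1 / K t else 0) := by
  intro c t hc ht hct
  rw [integral_hazard_div_survival_eq hK0 hKpos hK' hK'cont hlam (le_min hc ht)]
  rcases hct.lt_or_gt with hlt | hgt
  · rw [min_eq_left hlt.le, if_pos hlt.le, if_neg hlt.not_ge]
    ring
  · rw [min_eq_right hgt.le, if_neg hgt.not_ge, if_pos hgt.le]
    ring
end

section
/- (Unbiasedness of the inverse-probability-of-censoring weighted term under a correct censoring model.) The random variable 1{T ≥ t}·1{C ≥ t}/K_V is integrable and E[ 1{T ≥ t}·1{C ≥ t}/K_V ] = P(T ≥ t). -/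
open MeasureTheory ProbabilityTheory Filter Topology

theorem ipcw_unbiased_aux {Ω : Type*} {m : MeasurableSpace Ω} [mΩ : MeasurableSpace Ω]
    [StandardBorelSpace Ω] (hm : m ≤ mΩ)
    (P : Measure Ω) [IsProbabilityMeasure P]
    (T C : Ω → ℝ) (hT : Measurable T) (hC : Measurable C)
    (hTC : CondIndepFun m hm T C P)
    (t : ℝ)
    (K_V : Ω → ℝ)
    (hKV : K_V = P[(fun ω => if t ≤ C ω then (1:ℝ) else 0) | m])
    (hKVpos : ∀ᵐ ω ∂P, 0 < K_V ω) :
    Integrable (fun ω =>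
        (if t ≤ T ω then (1:ℝ) else 0) * (if t ≤ C ω then (1:ℝ) else 0) / K_V ω) P
      ∧ ∫ ω, (if t ≤ T ω then (1:ℝ) else 0) * (if t ≤ C ω then (1:ℝ) else 0) / K_V ω ∂P
          = (P {ω | t ≤ T ω}).toReal := by
  set A : Set Ω := T ⁻¹' Set.Ici t with hA_def
  set B : Set Ω := C ⁻¹' Set.Ici t with hB_def
  have hA : MeasurableSet A := hT measurableSet_Ici
  have hB : MeasurableSet B := hC measurableSet_Ici
  have hindB : (fun ω => if t ≤ C ω then (1:ℝ) else 0) = B.indicator (fun _ => (1:ℝ)) := by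
    funext ω
    by_cases h : t ≤ C ω <;>
      simp [hB_def, Set.indicator_apply, Set.mem_preimage, Set.mem_Ici, h]
  set f : Ω → ℝ := (A ∩ B).indicator (fun _ => (1:ℝ)) with hf_def
  have hf_eq : ∀ ω, (if t ≤ T ω then (1:ℝ) else 0) * (if t ≤ C ω then (1:ℝ) else 0) = f ω := by
    intro ω
    by_cases h1 : t ≤ T ω <;> by_cases h2 : t ≤ C ω <;>
      simp [hf_def, Set.indicator_apply, hA_def, hB_def, Set.mem_Ici, h1, h2]
  have hf_nonneg : ∀ ω, 0 ≤ f ω := fun ω => Set.indicator_nonneg (fun _ _ => zero_le_one) ω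
  have hf_le : ∀ ω, f ω ≤ 1 := by
    intro ω
    by_cases h : ω ∈ A ∩ B <;> simp [hf_def, Set.indicator_apply, h]
  have hf_sm : StronglyMeasurable f := stronglyMeasurable_const.indicator (hA.inter hB)
  have hf_int : Integrable f P := (integrable_const (1:ℝ)).indicator (hA.inter hB)
  have hKV' : K_V = P[B.indicator (fun _ => (1:ℝ)) | m] := by rw [hKV, hindB]
  have hK_sm : StronglyMeasurable[m] K_V := hKV' ▸ stronglyMeasurable_condExp
  -- conditional independence: factorization of the conditional expectation
  have hmul : P[f | m] =ᵐ[P]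
      fun ω => (P[A.indicator (fun _ => (1:ℝ)) | m]) ω * K_V ω := by
    have h := (condIndepFun_iff_condExp_inter_preimage_eq_mul (hm' := hm) hT hC).mp hTC
      (Set.Ici t) (Set.Ici t) measurableSet_Ici measurableSet_Ici
    refine h.trans ?_
    rw [hKV']
  set Z : Ω → ℝ := P[A.indicator (fun _ => (1:ℝ)) | m] with hZ_def
  have hZ_int : Integrable Z P := integrable_condExp
  have hZ_integral : ∫ ω, Z ω ∂P = (P A).toReal := by
    rw [hZ_def, integral_condExp hm]
    simp [integral_indicator_const, hA, measureReal_def]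
  -- truncated weights
  set g : ℕ → Ω → ℝ := fun n ω => max 0 (min ((K_V ω)⁻¹) n) with hg_def
  have hg_sm : ∀ n, StronglyMeasurable[m] (g n) := fun n =>
    (measurable_const.max (hK_sm.measurable.inv.min measurable_const)).stronglyMeasurable
  have hg_nonneg : ∀ n ω, 0 ≤ g n ω := fun n ω => le_max_left _ _
  have hg_le : ∀ n ω, g n ω ≤ n := fun n ω =>
    max_le (Nat.cast_nonneg n) (min_le_right _ _)
  have hg_mono : ∀ ω, Monotone fun n => g n ω := fun ω a b hab =>
    max_le_max le_rfl (min_le_min le_rfl (Nat.cast_le.mpr hab))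
  have hg_leinv : ∀ n ω, 0 < K_V ω → g n ω ≤ (K_V ω)⁻¹ := fun n ω hK =>
    max_le (inv_nonneg.mpr hK.le) (min_le_left _ _)
  have hg_tendsto : ∀ ω, 0 < K_V ω → Tendsto (fun n => g n ω) atTop (𝓝 ((K_V ω)⁻¹)) := by
    intro ω hK
    obtain ⟨n0, hn0⟩ := exists_nat_ge ((K_V ω)⁻¹)
    refine tendsto_atTop_of_eventually_const (i₀ := n0) fun n hn => ?_
    simp only [hg_def]
    rw [min_eq_left (hn0.trans (Nat.cast_le.mpr hn)), max_eq_right (inv_nonneg.mpr hK.le)]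
  -- integrability of the truncated products
  have hFn_int : ∀ n, Integrable (g n * f) P := by
    intro n
    refine Integrable.mono' (integrable_const (n:ℝ))
      ((((hg_sm n).mono hm).aestronglyMeasurable).mul hf_sm.aestronglyMeasurable)
      (Eventually.of_forall fun ω => ?_)
    rw [Pi.mul_apply, Real.norm_eq_abs, abs_mul, abs_of_nonneg (hg_nonneg n ω),
      abs_of_nonneg (hf_nonneg ω)]
    calc g n ω * f ω ≤ (n:ℝ) * 1 :=
          mul_le_mul (hg_le n ω) (hf_le ω) (hf_nonneg ω) (Nat.cast_nonneg n)
      _ = n := mul_one _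
  -- pull-out property
  have hint_eq : ∀ n, ∫ ω, (g n * f) ω ∂P = ∫ ω, g n ω * (Z ω * K_V ω) ∂P := by
    intro n
    rw [← integral_condExp hm (μ := P) (f := g n * f)]
    refine integral_congr_ae ?_
    filter_upwards [condExp_mul_of_stronglyMeasurable_left (hg_sm n) (hFn_int n) hf_int, hmul]
      with ω h1 h2
    rw [h1, Pi.mul_apply, h2]
  -- dominated convergence for the right-hand side
  have hdct : Tendsto (fun n => ∫ ω, g n ω * (Z ω * K_V ω) ∂P) atTop (𝓝 (∫ ω, Z ω ∂P)) := by
    refine tendsto_integral_of_dominated_convergence (fun ω => |Z ω|)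
      (fun n => (((hg_sm n).mono hm).aestronglyMeasurable).mul
        ((stronglyMeasurable_condExp.mono hm).aestronglyMeasurable.mul
          ((hK_sm.mono hm).aestronglyMeasurable)))
      hZ_int.abs ?_ ?_
    · intro n
      filter_upwards [hKVpos] with ω hK
      have hgK : g n ω * K_V ω ≤ 1 := by
        calc g n ω * K_V ω ≤ (K_V ω)⁻¹ * K_V ω :=
              mul_le_mul_of_nonneg_right (hg_leinv n ω hK) hK.le
          _ = 1 := inv_mul_cancel₀ hK.ne'
      calc ‖g n ω * (Z ω * K_V ω)‖ = (g n ω * K_V ω) * |Z ω| := by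
            rw [Real.norm_eq_abs, abs_mul, abs_mul, abs_of_nonneg (hg_nonneg n ω),
              abs_of_nonneg hK.le]; ring
        _ ≤ 1 * |Z ω| := mul_le_mul_of_nonneg_right hgK (abs_nonneg _)
        _ = |Z ω| := one_mul _
    · filter_upwards [hKVpos] with ω hK
      have h := (hg_tendsto ω hK).mul_const (Z ω * K_V ω)
      have heq : (K_V ω)⁻¹ * (Z ω * K_V ω) = Z ω := by
        field_simp
      rwa [heq] at h
  have htend_int : Tendsto (fun n => ∫ ω, (g n * f) ω ∂P) atTop (𝓝 ((P A).toReal)) := by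
    simp_rw [hint_eq]
    rw [← hZ_integral]
    exact hdct
  -- monotone convergence on the lintegral side
  set F : Ω → ℝ := fun ω => f ω / K_V ω with hF_def
  have hK_meas : Measurable K_V := (hK_sm.mono hm).measurable
  have hF_meas : Measurable F := (hf_sm.measurable).div hK_meas
  have hFn_nonneg : ∀ n ω, 0 ≤ (g n * f) ω := fun n ω =>
    mul_nonneg (hg_nonneg n ω) (hf_nonneg ω)
  have hmct : Tendsto (fun n => ∫⁻ ω, ENNReal.ofReal ((g n * f) ω) ∂P) atTop
      (𝓝 (∫⁻ ω, ENNReal.ofReal (F ω) ∂P)) := by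
    refine lintegral_tendsto_of_tendsto_of_monotone
      (fun n => ((((hg_sm n).mono hm).measurable).mul hf_sm.measurable).ennreal_ofReal.aemeasurable)
      (Eventually.of_forall fun ω a b hab => ENNReal.ofReal_le_ofReal
        (mul_le_mul_of_nonneg_right (hg_mono ω hab) (hf_nonneg ω))) ?_
    filter_upwards [hKVpos] with ω hK
    refine (ENNReal.continuous_ofReal.tendsto _).comp ?_
    have h := (hg_tendsto ω hK).mul_const (f ω)
    have heq : (K_V ω)⁻¹ * f ω = f ω / K_V ω := by rw [div_eq_mul_inv, mul_comm]
    rw [heq] at h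
    exact h
  have hlim : ∫⁻ ω, ENNReal.ofReal (F ω) ∂P = ENNReal.ofReal ((P A).toReal) := by
    refine tendsto_nhds_unique hmct ?_
    have h2 := (ENNReal.continuous_ofReal.tendsto ((P A).toReal)).comp htend_int
    simp only [Function.comp_def] at h2
    exact h2.congr fun n => ofReal_integral_eq_lintegral_ofReal (hFn_int n)
      (Eventually.of_forall (hFn_nonneg n))
  have hF_nonneg_ae : 0 ≤ᵐ[P] F := by
    filter_upwards [hKVpos] with ω hK
    exact div_nonneg (hf_nonneg ω) hK.le
  have hF_int : Integrable F P := by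
    refine ⟨hF_meas.aestronglyMeasurable, ?_⟩
    rw [hasFiniteIntegral_iff_ofReal hF_nonneg_ae, hlim]
    exact ENNReal.ofReal_lt_top
  have hFeq : (fun ω =>
      (if t ≤ T ω then (1:ℝ) else 0) * (if t ≤ C ω then (1:ℝ) else 0) / K_V ω) = F := by
    funext ω; rw [hf_eq]
  have hAset : A = {ω | t ≤ T ω} := rfl
  constructor
  · rw [hFeq]; exact hF_int
  · have hval : ∫ ω, F ω ∂P = (P A).toReal := by
      rw [integral_eq_lintegral_of_nonneg_ae hF_nonneg_ae hF_meas.aestronglyMeasurable, hlim,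
        ENNReal.toReal_ofReal ENNReal.toReal_nonneg]
    calc ∫ ω, (if t ≤ T ω then (1:ℝ) else 0) * (if t ≤ C ω then (1:ℝ) else 0) / K_V ω ∂P
        = ∫ ω, F ω ∂P := by rw [hFeq]
      _ = (P A).toReal := hval
      _ = (P {ω | t ≤ T ω}).toReal := by rw [hAset]

/-- **Unbiasedness of the IPCW term under a correct censoring model.**
If the event time `T` and censoring time `C` are conditionally independent given the
covariates `V`, and `K_V = E[1{C ≥ t} ∣ σ(V)]` is a.s. strictly positive, then
`1{T ≥ t}·1{C ≥ t}/K_V` is integrable with mean `P(T ≥ t)`. -/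
theorem ipcw_unbiased
    {Ω : Type*} [MeasurableSpace Ω] [StandardBorelSpace Ω]
    (P : Measure Ω) [IsProbabilityMeasure P]
    {E : Type*} [MeasurableSpace E] [StandardBorelSpace E]
    (V : Ω → E) (hV : Measurable V)
    (T C : Ω → ℝ) (hT : Measurable T) (hC : Measurable C)
    (hTC : CondIndepFun (MeasurableSpace.comap V inferInstance) (Measurable.comap_le hV) T C P)
    (t : ℝ)
    (K_V : Ω → ℝ)
    (hKV : K_V = P[(fun ω => if t ≤ C ω then (1:ℝ) else 0) |
      MeasurableSpace.comap V inferInstance])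
    (hKVpos : ∀ᵐ ω ∂P, 0 < K_V ω) :
    Integrable (fun ω =>
        (if t ≤ T ω then (1:ℝ) else 0) * (if t ≤ C ω then (1:ℝ) else 0) / K_V ω) P
      ∧ ∫ ω, (if t ≤ T ω then (1:ℝ) else 0) * (if t ≤ C ω then (1:ℝ) else 0) / K_V ω ∂P
          = (P {ω | t ≤ T ω}).toReal := by
  exact ipcw_unbiased_aux (Measurable.comap_le hV) P T C hT hC hTC t K_V hKV hKVpos
end

section
/- (Zero-mean property of the augmentation terms under a correct outcome model; core of E[(9)] = 0 in the proof of Proposition 2.) For every bounded measurable w : ℝ → ℝ, both E[ w(C)·1{C < T}·1{C ≤ t}·( g(t)/g(C) − 1{T ≥ t} ) ] = 0 and E[ ∫_0^{min(T, C, t)} w(u)·( g(t)/g(u) − 1{T ≥ t} ) du ] = 0, regardless of the choice of censoring weights w. -/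
open MeasureTheory ProbabilityTheory

lemma integrable_of_abs_le' {α : Type*} [MeasurableSpace α] (μ : Measure α) [IsFiniteMeasure μ]
    {f : α → ℝ} (hf : AEStronglyMeasurable f μ) {M : ℝ} (h : ∀ x, |f x| ≤ M) :
    Integrable f μ :=
  Integrable.mono' (integrable_const M) hf (Filter.Eventually.of_forall h)

lemma measurable_ite_one' {α : Type*} [MeasurableSpace α]
    (p : α → Prop) [DecidablePred p] (hp : MeasurableSet {x | p x}) :
    Measurable (fun x => if p x then (1:ℝ) else 0) :=
  Measurable.ite hp measurable_const measurable_const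

lemma integrable_ite_one' {α : Type*} [MeasurableSpace α] (μ : Measure α) [IsFiniteMeasure μ]
    (p : α → Prop) [DecidablePred p] (hp : MeasurableSet {x | p x}) :
    Integrable (fun x => if p x then (1:ℝ) else 0) μ :=
  integrable_of_abs_le' μ (measurable_ite_one' p hp).aestronglyMeasurable
    (M := 1) (fun x => by split_ifs <;> simp)

lemma integral_ite_one' {α : Type*} [MeasurableSpace α] (μ : Measure α) [IsFiniteMeasure μ]
    (p : α → Prop) [DecidablePred p] (hp : MeasurableSet {x | p x}) :
    ∫ x, (if p x then (1:ℝ) else 0) ∂μ = (μ {x | p x}).toReal := by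
  have h : ∀ x, (if p x then (1:ℝ) else 0) = Set.indicator {x | p x} (fun _ => (1:ℝ)) x := by
    intro x; simp [Set.indicator_apply, Set.mem_setOf_eq]
  simp only [h]
  rw [integral_indicator_const (1:ℝ) hp, smul_eq_mul, mul_one]
  rfl

/-- **Zero-mean property of the augmentation terms under a correct outcome model**
(core of `E[(9)] = 0` in the proof of Proposition 2).  Let `T` and `C` be independent
nonnegative random variables with `C` atomless, and set `g(u) = P(T ≥ u)`, strictly
positive on `[0,t]`.  Then for every bounded measurable `w : ℝ → ℝ`, both
`E[w(C)·1{C<T}·1{C≤t}·(g(t)/g(C) − 1{T≥t})] = 0` and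
`E[∫_0^{min(T,C,t)} w(u)·(g(t)/g(u) − 1{T≥t}) du] = 0`. -/
theorem augmentation_terms_zero_mean
    {Ω : Type*} [MeasurableSpace Ω] (P : Measure Ω) [IsProbabilityMeasure P]
    (T C : Ω → ℝ) (hT : Measurable T) (hC : Measurable C)
    (hTC : IndepFun T C P)
    (hT0 : ∀ᵐ ω ∂P, 0 ≤ T ω) (hC0 : ∀ᵐ ω ∂P, 0 ≤ C ω)
    (hCatomless : ∀ c : ℝ, P {ω | C ω = c} = 0)
    (t : ℝ) (ht : 0 ≤ t)
    (g : ℝ → ℝ) (hg : ∀ u : ℝ, g u = (P {ω | u ≤ T ω}).toReal)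
    (hgpos : ∀ u ∈ Set.Icc (0:ℝ) t, 0 < g u) :
    ∀ w : ℝ → ℝ, Measurable w → (∃ M : ℝ, ∀ u : ℝ, |w u| ≤ M) →
      (∫ ω, w (C ω) * (if C ω < T ω then (1:ℝ) else 0) * (if C ω ≤ t then (1:ℝ) else 0)
          * (g t / g (C ω) - (if t ≤ T ω then (1:ℝ) else 0)) ∂P = 0)
      ∧ (∫ ω, (∫ u in (0:ℝ)..(min (T ω) (min (C ω) t)),
            w u * (g t / g u - (if t ≤ T ω then (1:ℝ) else 0))) ∂P = 0) := by
  intro w hw hbd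
  obtain ⟨M, hM⟩ := hbd
  have hM0 : 0 ≤ M := le_trans (abs_nonneg _) (hM 0)
  set μ : Measure ℝ := P.map T with hμdef
  set ν : Measure ℝ := P.map C with hνdef
  haveI : IsProbabilityMeasure μ := Measure.isProbabilityMeasure_map hT.aemeasurable
  haveI : IsProbabilityMeasure ν := Measure.isProbabilityMeasure_map hC.aemeasurable
  have hgμ : ∀ u, g u = (μ {x | u ≤ x}).toReal := by
    intro u
    have hms : MeasurableSet {x : ℝ | u ≤ x} := measurableSet_le measurable_const measurable_id'
    have : μ {x | u ≤ x} = P {ω | u ≤ T ω} := Measure.map_apply hT hms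
    rw [hg u, this]
  have hganti : Antitone g := by
    intro a b hab
    rw [hgμ a, hgμ b]
    exact ENNReal.toReal_mono (measure_ne_top _ _)
      (measure_mono (fun x hx => le_trans hab hx))
  have hg_nonneg : ∀ u, 0 ≤ g u := fun u => by rw [hgμ u]; exact ENNReal.toReal_nonneg
  have hgpos' : ∀ u, u ≤ t → 0 < g u := by
    intro u hu
    rcases le_or_gt 0 u with h0 | h0
    · exact hgpos u ⟨h0, hu⟩
    · exact lt_of_lt_of_le (hgpos 0 ⟨le_refl 0, ht⟩) (hganti h0.le)
  have hgm : Measurable g := hganti.measurable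
  haveI : NullSingletonClass ν := by
    constructor
    intro c
    rw [hνdef, Measure.map_apply hC (measurableSet_singleton c)]
    have : C ⁻¹' {c} = {ω | C ω = c} := by ext ω; simp
    rw [this]; exact hCatomless c
  have hmap : P.map (fun ω => (T ω, C ω)) = μ.prod ν :=
    (indepFun_iff_map_prod_eq_prod_map_map hT.aemeasurable hC.aemeasurable).mp hTC
  constructor
  · -- ═══════ Part 1 ═══════
    set F : ℝ × ℝ → ℝ := fun p =>
      w p.2 * (if p.2 < p.1 then (1:ℝ) else 0) * (if p.2 ≤ t then (1:ℝ) else 0)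
        * (g t / g p.2 - if t ≤ p.1 then (1:ℝ) else 0) with hFdef
    have hFmeas : Measurable F := by
      refine Measurable.mul (Measurable.mul (Measurable.mul ?_ ?_) ?_) ?_
      · exact hw.comp measurable_snd
      · exact Measurable.ite (measurableSet_lt measurable_snd measurable_fst)
          measurable_const measurable_const
      · exact Measurable.ite (measurableSet_le measurable_snd measurable_const)
          measurable_const measurable_const
      · exact Measurable.sub (measurable_const.div (hgm.comp measurable_snd))
          (Measurable.ite (measurableSet_le measurable_const measurable_fst)
            measurable_const measurable_const)
    have hFbd : ∀ p, |F p| ≤ M * 2 := by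
      intro p
      rcases le_or_gt p.2 t with h | h
      · have h1 : 0 < g p.2 := hgpos' _ h
        have hq : 0 ≤ g t / g p.2 := div_nonneg (hg_nonneg t) h1.le
        have hq1 : g t / g p.2 ≤ 1 := (div_le_one h1).mpr (hganti h)
        have e1 : |(if p.2 < p.1 then (1:ℝ) else 0)| ≤ 1 := by split_ifs <;> simp
        have e2 : |(if p.2 ≤ t then (1:ℝ) else 0)| ≤ 1 := by split_ifs <;> simp
        have e3 : |g t / g p.2 - (if t ≤ p.1 then (1:ℝ) else 0)| ≤ 2 := by
          split_ifs <;> rw [abs_le] <;> constructor <;> linarith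
        calc |F p| = ((|w p.2| * |(if p.2 < p.1 then (1:ℝ) else 0)|)
              * |(if p.2 ≤ t then (1:ℝ) else 0)|)
              * |g t / g p.2 - (if t ≤ p.1 then (1:ℝ) else 0)| := by
              simp only [hFdef]
              rw [abs_mul, abs_mul, abs_mul]
          _ ≤ ((M * 1) * 1) * 2 :=
              mul_le_mul (mul_le_mul (mul_le_mul (hM p.2) e1 (abs_nonneg _) hM0) e2
                (abs_nonneg _) (by positivity)) e3 (abs_nonneg _) (by positivity)
          _ = M * 2 := by ring
      · have : F p = 0 := by simp [hFdef, if_neg (not_le.mpr h)]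
        rw [this, abs_zero]; positivity
    have hFint : Integrable F (μ.prod ν) :=
      integrable_of_abs_le' _ hFmeas.aestronglyMeasurable hFbd
    have step1 : ∫ ω, w (C ω) * (if C ω < T ω then (1:ℝ) else 0)
        * (if C ω ≤ t then (1:ℝ) else 0)
        * (g t / g (C ω) - (if t ≤ T ω then (1:ℝ) else 0)) ∂P
        = ∫ p, F p ∂(μ.prod ν) := by
      rw [← hmap, integral_map (hT.prodMk hC).aemeasurable hFmeas.aestronglyMeasurable]
    rw [step1, integral_prod_symm F hFint]
    have hatoms : ∀ᵐ y ∂ν, μ {y} = 0 ∧ y ≠ t := by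
      have hcnt : Set.Countable {y : ℝ | 0 < μ {x | x = y}} :=
        Measure.countable_meas_level_set_pos measurable_id
      have hcnt' : Set.Countable ({y : ℝ | 0 < μ {x | x = y}} ∪ {t}) :=
        hcnt.union (Set.countable_singleton t)
    -- the bad set has ν-measure 0
      have hbad : ν ({y : ℝ | 0 < μ {x | x = y}} ∪ {t}) = 0 :=
        Set.Countable.measure_zero hcnt' ν
      rw [Filter.eventually_iff, mem_ae_iff]
      refine measure_mono_null ?_ hbad
      intro y hy
      simp only [Set.mem_compl_iff, Set.mem_setOf_eq, not_and_or, not_not] at hy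
      rcases hy with hy | hy
      · left
        simp only [Set.mem_setOf_eq]
        have : {x : ℝ | x = y} = {y} := by ext x; simp [Set.mem_setOf_eq]
        rw [this]
        exact pos_iff_ne_zero.mpr hy
      · right; simp [hy]
    have hinner : ∀ᵐ y ∂ν, (∫ x, F (x, y) ∂μ) = 0 := by
      filter_upwards [hatoms] with y hy
      obtain ⟨hy0, hyt⟩ := hy
      rcases lt_or_ge t y with hyt' | hyt'
      · have : (fun x => F (x, y)) = fun _ => (0:ℝ) := by
          funext x; simp [hFdef, if_neg (not_le.mpr hyt')]
        rw [this, integral_zero]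
      · have hylt : y < t := lt_of_le_of_ne hyt' hyt
        have hgy : 0 < g y := hgpos' y hyt'
        have hre : (fun x => F (x, y)) = fun x =>
            (w y * (if y ≤ t then (1:ℝ) else 0)) *
              ((g t / g y) * (if y < x then (1:ℝ) else 0)
                - (if y < x ∧ t ≤ x then (1:ℝ) else 0)) := by
          funext x
          simp only [hFdef]
          by_cases h1 : y < x <;> by_cases h2 : t ≤ x <;>
            simp [h1, h2] <;> ring
        rw [hre, integral_const_mul]
        have ms1 : MeasurableSet {x : ℝ | y < x} :=
          measurableSet_lt measurable_const measurable_id'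
        have ms2 : MeasurableSet {x : ℝ | y < x ∧ t ≤ x} :=
          (measurableSet_lt measurable_const measurable_id').inter
            (measurableSet_le measurable_const measurable_id')
        have i1 : Integrable (fun x => (if y < x then (1:ℝ) else 0)) μ :=
          integrable_ite_one' μ (fun x => y < x) ms1
        have i2 : Integrable (fun x => (if y < x ∧ t ≤ x then (1:ℝ) else 0)) μ :=
          integrable_ite_one' μ (fun x => y < x ∧ t ≤ x) ms2
        rw [integral_sub (i1.const_mul _) i2, integral_const_mul,
          integral_ite_one' μ (fun x => y < x) ms1,
          integral_ite_one' μ (fun x => y < x ∧ t ≤ x) ms2]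
        have m1 : (μ {x | y < x}).toReal = g y := by
          rw [hgμ y]
          congr 1
          have hset : {x : ℝ | y ≤ x} = {x | y < x} ∪ {y} := by
            ext x
            simp only [Set.mem_setOf_eq, Set.mem_union, Set.mem_singleton_iff]
            constructor
            · intro hx; rcases lt_or_eq_of_le hx with h | h
              · exact Or.inl h
              · exact Or.inr h.symm
            · rintro (h | h); exacts [h.le, h.ge]
          rw [hset]
          exact le_antisymm ((measure_union_le _ _).trans (by rw [hy0, add_zero]))
            (measure_mono Set.subset_union_left) |>.symm
        have m2 : (μ {x | y < x ∧ t ≤ x}).toReal = g t := by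
          have hset : {x : ℝ | y < x ∧ t ≤ x} = {x | t ≤ x} := by
            ext x
            simp only [Set.mem_setOf_eq, and_iff_right_iff_imp]
            intro hx
            exact lt_of_lt_of_le hylt hx
          rw [hset, ← hgμ t]
        rw [m1, m2, div_mul_cancel₀ _ (ne_of_gt hgy), sub_self, mul_zero]
    rw [integral_congr_ae hinner, integral_zero]
  · -- ═══════ Part 2 ═══════
    set G : Ω × ℝ → ℝ := fun q =>
      (if 0 < q.2 ∧ q.2 ≤ min (T q.1) (min (C q.1) t) then (1:ℝ) else 0)
        * (w q.2 * (g t / g q.2 - if t ≤ T q.1 then (1:ℝ) else 0)) with hGdef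
    have hGmeas : Measurable G := by
      apply Measurable.mul
      · refine Measurable.ite ?_ measurable_const measurable_const
        exact (measurableSet_lt measurable_const measurable_snd).inter
          (measurableSet_le measurable_snd
            ((hT.comp measurable_fst).min ((hC.comp measurable_fst).min measurable_const)))
      · exact (hw.comp measurable_snd).mul
          ((measurable_const.div (hgm.comp measurable_snd)).sub
            (Measurable.ite (measurableSet_le measurable_const (hT.comp measurable_fst))
              measurable_const measurable_const))
    have hGbd : ∀ q : Ω × ℝ, |G q| ≤ Set.indicator (Set.Ioc (0:ℝ) t) (fun _ => M * 2) q.2 := by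
      intro q
      by_cases hq : 0 < q.2 ∧ q.2 ≤ min (T q.1) (min (C q.1) t)
      · have hq2 : q.2 ∈ Set.Ioc (0:ℝ) t :=
          ⟨hq.1, le_trans hq.2 (le_trans (min_le_right _ _) (min_le_right _ _))⟩
        rw [Set.indicator_of_mem hq2]
        have hgq : 0 < g q.2 := hgpos' _ hq2.2
        have h1 : 0 ≤ g t / g q.2 := div_nonneg (hg_nonneg t) hgq.le
        have h2 : g t / g q.2 ≤ 1 := (div_le_one hgq).mpr (hganti hq2.2)
        have e3 : |g t / g q.2 - (if t ≤ T q.1 then (1:ℝ) else 0)| ≤ 2 := by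
          split_ifs <;> rw [abs_le] <;> constructor <;> linarith
        calc |G q| = |w q.2| * |g t / g q.2 - (if t ≤ T q.1 then (1:ℝ) else 0)| := by
              simp only [hGdef]
              rw [if_pos hq, one_mul, abs_mul]
          _ ≤ M * 2 := mul_le_mul (hM _) e3 (abs_nonneg _) hM0
      · have : G q = 0 := by simp only [hGdef]; rw [if_neg hq, zero_mul]
        rw [this, abs_zero]
        exact Set.indicator_nonneg (fun _ _ => by positivity) _
    have hGint : Integrable G (P.prod volume) := by
      refine Integrable.mono' ?_ hGmeas.aestronglyMeasurable (Filter.Eventually.of_forall hGbd)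
      have : (fun q : Ω × ℝ => Set.indicator (Set.Ioc (0:ℝ) t) (fun _ => M * 2) q.2)
          = fun q : Ω × ℝ => (fun _ : Ω => (1:ℝ)) q.1
            * (fun u => Set.indicator (Set.Ioc (0:ℝ) t) (fun _ => M * 2) u) q.2 := by
        funext q; simp
      rw [this]
      exact Integrable.mul_prod (integrable_const (1:ℝ))
        ((integrable_indicator_iff measurableSet_Ioc).mpr
          (integrableOn_const measure_Ioc_lt_top.ne))
    have stepA : ∀ᵐ ω ∂P, (∫ u in (0:ℝ)..(min (T ω) (min (C ω) t)),
        w u * (g t / g u - if t ≤ T ω then (1:ℝ) else 0)) = ∫ u, G (ω, u) := by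
      filter_upwards [hT0, hC0] with ω hTω hCω
      have hm : (0:ℝ) ≤ min (T ω) (min (C ω) t) := le_min hTω (le_min hCω ht)
      rw [intervalIntegral.integral_of_le hm, ← integral_indicator measurableSet_Ioc]
      congr 1
      funext u
      simp only [hGdef, Set.indicator_apply, Set.mem_Ioc]
      by_cases h : 0 < u ∧ u ≤ min (T ω) (min (C ω) t)
      · rw [if_pos h, if_pos h, one_mul]
      · rw [if_neg h, if_neg h, zero_mul]
    rw [integral_congr_ae stepA, ← integral_prod G hGint, integral_prod_symm G hGint]
    have hzero : ∀ u : ℝ, (∫ ω, G (ω, u) ∂P) = 0 := by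
      intro u
      by_cases hu : u ∈ Set.Ioc (0:ℝ) t
      · obtain ⟨hu0, hut⟩ := hu
        have hgu : 0 < g u := hgpos' u hut
        set φ : ℝ → ℝ := fun x =>
          (if u ≤ x then (1:ℝ) else 0) * (w u * (g t / g u - if t ≤ x then (1:ℝ) else 0))
          with hφdef
        set ψ : ℝ → ℝ := fun y => (if u ≤ y then (1:ℝ) else 0) with hψdef
        have hφm : Measurable φ := by
          exact (Measurable.ite (measurableSet_le measurable_const measurable_id')
              measurable_const measurable_const).mul
            (measurable_const.mul (Measurable.sub measurable_const
              (Measurable.ite (measurableSet_le measurable_const measurable_id')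
                measurable_const measurable_const)))
        have hψm : Measurable ψ :=
          Measurable.ite (measurableSet_le measurable_const measurable_id')
            measurable_const measurable_const
        have hGφψ : (fun ω => G (ω, u)) = (φ ∘ T) * (ψ ∘ C) := by
          funext ω
          simp only [hGdef, hφdef, hψdef, Pi.mul_apply, Function.comp_apply]
          by_cases h1 : u ≤ T ω <;> by_cases h2 : u ≤ C ω <;>
            simp [h1, h2, hu0, hut, le_min_iff]
        have hφint : Integrable (φ ∘ T) P := by
          refine integrable_of_abs_le' P ((hφm.comp hT).aestronglyMeasurable)
            (M := 1 * (M * 2)) (fun ω => ?_)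
          simp only [Function.comp_apply, hφdef]
          have h1 : 0 ≤ g t / g u := div_nonneg (hg_nonneg t) hgu.le
          have h2 : g t / g u ≤ 1 := (div_le_one hgu).mpr (hganti hut)
          rw [abs_mul, abs_mul]
          refine mul_le_mul (by split_ifs <;> simp) (mul_le_mul (hM _) ?_ (abs_nonneg _) hM0)
            (by positivity) (by norm_num)
          split_ifs <;> rw [abs_le] <;> constructor <;> linarith
        have hψint : Integrable (ψ ∘ C) P := by
          refine integrable_of_abs_le' P ((hψm.comp hC).aestronglyMeasurable)
            (M := 1) (fun ω => ?_)
          simp only [Function.comp_apply, hψdef]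
          split_ifs <;> simp
        have hind : IndepFun (φ ∘ T) (ψ ∘ C) P := hTC.comp hφm hψm
        have hmul := hind.integral_mul_eq_mul_integral hφint.aestronglyMeasurable hψint.aestronglyMeasurable
        rw [hGφψ]
        have hφzero : ∫ ω, (φ ∘ T) ω ∂P = 0 := by
          have : ∫ ω, (φ ∘ T) ω ∂P = ∫ x, φ x ∂μ := by
            rw [hμdef, integral_map hT.aemeasurable (hφm.aestronglyMeasurable)]
            rfl
          rw [this]
          have hre : φ = fun x => (w u * (g t / g u)) * (if u ≤ x then (1:ℝ) else 0)
              - w u * (if u ≤ x ∧ t ≤ x then (1:ℝ) else 0) := by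
            funext x
            simp only [hφdef]
            by_cases h1 : u ≤ x <;> by_cases h2 : t ≤ x <;> simp [h1, h2] <;> ring
          have msu : MeasurableSet {x : ℝ | u ≤ x} :=
            measurableSet_le measurable_const measurable_id'
          have msut : MeasurableSet {x : ℝ | u ≤ x ∧ t ≤ x} :=
            msu.inter (measurableSet_le measurable_const measurable_id')
          have iu : Integrable (fun x => (if u ≤ x then (1:ℝ) else 0)) μ :=
            integrable_ite_one' μ (fun x => u ≤ x) msu
          have iut : Integrable (fun x => (if u ≤ x ∧ t ≤ x then (1:ℝ) else 0)) μ :=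
            integrable_ite_one' μ (fun x => u ≤ x ∧ t ≤ x) msut
          rw [hre, integral_sub (iu.const_mul _) (iut.const_mul _),
            integral_const_mul, integral_const_mul,
            integral_ite_one' μ (fun x => u ≤ x) msu,
            integral_ite_one' μ (fun x => u ≤ x ∧ t ≤ x) msut]
          have m1 : (μ {x | u ≤ x}).toReal = g u := (hgμ u).symm
          have m2 : (μ {x | u ≤ x ∧ t ≤ x}).toReal = g t := by
            have hset : {x : ℝ | u ≤ x ∧ t ≤ x} = {x | t ≤ x} := by
              ext x
              simp only [Set.mem_setOf_eq, and_iff_right_iff_imp]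
              intro hx
              exact le_trans hut hx
            rw [hset, ← hgμ t]
          rw [m1, m2, mul_assoc, div_mul_cancel₀ _ (ne_of_gt hgu), sub_self]
        calc ∫ ω, ((φ ∘ T) * (ψ ∘ C)) ω ∂P = (∫ ω, (φ ∘ T) ω ∂P) * ∫ ω, (ψ ∘ C) ω ∂P := hmul
          _ = 0 := by rw [hφzero, zero_mul]
      · have : (fun ω => G (ω, u)) = fun _ => (0:ℝ) := by
          funext ω
          simp only [hGdef]
          have hnot : ¬(0 < u ∧ u ≤ min (T ω) (min (C ω) t)) := by
            rintro ⟨h1, h2⟩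
            exact hu ⟨h1, le_trans h2 (le_trans (min_le_right _ _) (min_le_right _ _))⟩
          rw [if_neg hnot, zero_mul]
        rw [this, integral_zero]
    simp only [hzero, integral_zero]
end

section
/- (Proposition 2, double robustness, single-observation form.) If either (i) the censoring model is correct, i.e. K(u) = P(C ≥ u) for all u ∈ [0, t], or (ii) the outcome model is correct, i.e. g(u) = P(T ≥ u) for all u ∈ [0, t], then the doubly robust score φ is integrable and E[φ] = P(T ≥ t). -/
open MeasureTheory ProbabilityTheory Set

noncomputable def drsClamp (t x : ℝ) : ℝ := max 0 (min x t)

lemma drsClamp_mem {t : ℝ} (ht : 0 ≤ t) (x : ℝ) : drsClamp t x ∈ Icc 0 t := by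
  constructor
  · exact le_max_left _ _
  · exact max_le ht (min_le_right _ _)

lemma drsClamp_eq {t x : ℝ} (hx : x ∈ Icc 0 t) : drsClamp t x = x := by
  unfold drsClamp
  rw [min_eq_left hx.2, max_eq_right hx.1]

lemma drsClamp_cont (t : ℝ) : Continuous (drsClamp t) :=
  continuous_const.max (continuous_id.min continuous_const)

lemma drsFTC (K K' : ℝ → ℝ)
    (hK' : ∀ u ∈ Ici (0:ℝ), HasDerivWithinAt K (K' u) (Ici 0) u)
    (hK'cont : ContinuousOn K' (Ici 0))
    {a b : ℝ} (ha : 0 ≤ a) (hab : a ≤ b) :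
    ∫ u in a..b, K' u = K b - K a := by
  have hsub : Icc a b ⊆ Ici (0:ℝ) := fun x hx => le_trans ha hx.1
  apply intervalIntegral.integral_eq_sub_of_hasDeriv_right_of_le hab
  · exact fun x hx => ((hK' x (hsub hx)).continuousWithinAt).mono hsub
  · intro x hx
    exact (hK' x (lt_of_le_of_lt ha hx.1).le).mono
      (fun y hy => le_trans (le_trans ha hx.1.le) (le_of_lt hy))
  · apply ContinuousOn.intervalIntegrable
    rw [uIcc_of_le hab]
    exact hK'cont.mono hsub

lemma drsFTCinv (K K' : ℝ → ℝ) (t : ℝ)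
    (hK' : ∀ u ∈ Ici (0:ℝ), HasDerivWithinAt K (K' u) (Ici 0) u)
    (hK'cont : ContinuousOn K' (Ici 0))
    (hKpos : ∀ u ∈ Icc (0:ℝ) t, 0 < K u)
    {a b : ℝ} (ha : 0 ≤ a) (hab : a ≤ b) (hbt : b ≤ t) :
    ∫ u in a..b, -K' u / (K u)^2 = (K b)⁻¹ - (K a)⁻¹ := by
  have hsub : Icc a b ⊆ Ici (0:ℝ) := fun x hx => le_trans ha hx.1
  have hsub' : Icc a b ⊆ Icc (0:ℝ) t := fun x hx => ⟨le_trans ha hx.1, le_trans hx.2 hbt⟩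
  have hKcont : ContinuousOn K (Ici 0) := fun x hx => (hK' x hx).continuousWithinAt
  apply intervalIntegral.integral_eq_sub_of_hasDeriv_right_of_le hab
  · exact ((hKcont.mono hsub).inv₀ (fun x hx => (hKpos x (hsub' hx)).ne'))
  · intro x hx
    have hx0 : (0:ℝ) < x := lt_of_le_of_lt ha hx.1
    have hd : HasDerivWithinAt (fun y => (K y)⁻¹) (-K' x / (K x)^2) (Ici 0) x :=
      (hK' x hx0.le).inv (hKpos x (hsub' ⟨hx.1.le, hx.2.le⟩)).ne'
    exact hd.mono (fun y hy => le_trans hx0.le (le_of_lt hy))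
  · apply ContinuousOn.intervalIntegrable
    rw [uIcc_of_le hab]
    exact ((hK'cont.mono hsub).neg).div ((hKcont.mono hsub).pow 2)
      (fun x hx => pow_ne_zero _ (hKpos x (hsub' hx)).ne')

lemma drsDerivNonpos (K K' : ℝ → ℝ) (t : ℝ)
    (hK' : ∀ u ∈ Ici (0:ℝ), HasDerivWithinAt K (K' u) (Ici 0) u)
    (hanti : ∀ x ∈ Icc (0:ℝ) t, ∀ y ∈ Icc (0:ℝ) t, x ≤ y → K y ≤ K x)
    {x : ℝ} (hx : x ∈ Ioo (0:ℝ) t) : K' x ≤ 0 := by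
  have hd : HasDerivAt K (K' x) x :=
    (hK' x hx.1.le).hasDerivAt (Ici_mem_nhds hx.1)
  have hslope := hasDerivAt_iff_tendsto_slope.mp hd
  have hmono : nhdsWithin x (Ioi x) ≤ nhdsWithin x {x}ᶜ :=
    nhdsWithin_mono x (fun y hy => ne_of_gt hy)
  refine le_of_tendsto (hslope.mono_left hmono) ?_
  filter_upwards [Ioo_mem_nhdsGT_of_mem ⟨le_refl x, hx.2⟩] with y hy
  rw [slope_def_field]
  apply div_nonpos_of_nonpos_of_nonneg
  · exact sub_nonpos.2 (hanti x ⟨hx.1.le, hx.2.le⟩ y ⟨(lt_trans hx.1 hy.1).le, hy.2.le⟩ hy.1.le)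
  · exact sub_nonneg.2 hy.1.le

lemma drsIndInt (m : Measure ℝ) [IsFiniteMeasure m] (c : ℝ) :
    ∫ x, (if c < x then (1:ℝ) else 0) ∂m = (m (Ioi c)).toReal := by
  have : (fun x => if c < x then (1:ℝ) else 0) = (Ioi c).indicator (fun _ => (1:ℝ)) := by
    funext x; simp [Set.indicator_apply, Set.mem_Ioi]
  rw [this, integral_indicator_const (1:ℝ) measurableSet_Ioi, smul_eq_mul, mul_one, measureReal_def]

lemma drsIciIoi1 (ν : Measure ℝ) (x : ℝ) (hx : ν {x} = 0) :
    ν (Ici x) = ν (Ioi x) := by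
  apply le_antisymm
  · have : Ici x = {x} ∪ Ioi x := by
      ext y; simp [le_iff_lt_or_eq, or_comm, eq_comm]
    rw [this]
    calc ν ({x} ∪ Ioi x) ≤ ν {x} + ν (Ioi x) := measure_union_le _ _
      _ = ν (Ioi x) := by rw [hx, zero_add]
  · exact measure_mono Ioi_subset_Ici_self

lemma drsIciIoi (ν : Measure ℝ) (hνa : ∀ x : ℝ, ν {x} = 0) (x : ℝ) :
    ν (Ici x) = ν (Ioi x) := drsIciIoi1 ν x (hνa x)

lemma drsMeasEq (ν : Measure ℝ) [IsFiniteMeasure ν] (hνa : ∀ x : ℝ, ν {x} = 0)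
    (t : ℝ) (ht : 0 ≤ t) (K K' : ℝ → ℝ)
    (hK' : ∀ u ∈ Ici (0:ℝ), HasDerivWithinAt K (K' u) (Ici 0) u)
    (hK'cont : ContinuousOn K' (Ici 0))
    (hK : ∀ u ∈ Icc (0:ℝ) t, K u = (ν (Ici u)).toReal) :
    ν.restrict (Ioc 0 t)
      = (volume.restrict (Ioc 0 t)).withDensity
          (fun u => ((-K' (drsClamp t u)).toNNReal : ENNReal)) := by
  haveI : IsFiniteMeasure (ν.restrict (Ioc 0 t)) :=
    ⟨by rw [Measure.restrict_apply_univ]; exact measure_lt_top ν _⟩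
  have hanti : ∀ x ∈ Icc (0:ℝ) t, ∀ y ∈ Icc (0:ℝ) t, x ≤ y → K y ≤ K x := by
    intro x hx y hy hxy
    rw [hK x hx, hK y hy]
    exact ENNReal.toReal_mono (measure_ne_top ν _) (measure_mono (Ici_subset_Ici.2 hxy))
  have hsign : ∀ x ∈ Ioo (0:ℝ) t, K' x ≤ 0 := fun x hx => drsDerivNonpos K K' t hK' hanti hx
  apply Measure.ext_of_Ioc
  intro a b hab
  rw [Measure.restrict_apply measurableSet_Ioc,
    withDensity_apply _ measurableSet_Ioc, Measure.restrict_restrict measurableSet_Ioc,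
    Ioc_inter_Ioc]
  set a' := max a 0 with ha'
  set b' := min b t with hb'
  rcases le_or_gt b' a' with hba | hab'
  · rw [Ioc_eq_empty (not_lt.2 hba)]
    simp
  · have ha0 : (0:ℝ) ≤ a' := le_max_right _ _
    have hbt : b' ≤ t := min_le_right _ _
    have ha'm : a' ∈ Icc (0:ℝ) t := ⟨ha0, le_trans hab'.le hbt⟩
    have hb'm : b' ∈ Icc (0:ℝ) t := ⟨le_trans ha0 hab'.le, hbt⟩
    -- LHS
    have hdiff : Ioc a' b' = Ioi a' \ Ioi b' := by
      ext x; simp only [mem_Ioc, mem_diff, mem_Ioi, not_lt]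
    have hν1 : ν (Ioi a') = ENNReal.ofReal (K a') := by
      rw [← drsIciIoi ν hνa, hK a' ha'm, ENNReal.ofReal_toReal (measure_ne_top ν _)]
    have hν2 : ν (Ioi b') = ENNReal.ofReal (K b') := by
      rw [← drsIciIoi ν hνa, hK b' hb'm, ENNReal.ofReal_toReal (measure_ne_top ν _)]
    have hL : ν (Ioc a' b') = ENNReal.ofReal (K a' - K b') := by
      rw [hdiff, measure_diff (Ioi_subset_Ioi hab'.le) measurableSet_Ioi.nullMeasurableSet
        (measure_ne_top ν _), hν1, hν2,
        ENNReal.ofReal_sub _ (by rw [hK b' hb'm]; exact ENNReal.toReal_nonneg)]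
    -- RHS
    have hKcont : ContinuousOn K (Ici 0) := fun x hx => (hK' x hx).continuousWithinAt
    have hsubIcc : Icc a' b' ⊆ Ici (0:ℝ) := fun x hx => le_trans ha0 hx.1
    have hint : IntegrableOn (fun u => -K' u) (Ioc a' b') volume := by
      exact ((hK'cont.mono hsubIcc).neg.integrableOn_compact isCompact_Icc).mono_set
        Ioc_subset_Icc_self
    have hae : ∀ᵐ u ∂(volume.restrict (Ioc a' b')), 0 ≤ -K' u := by
      have h1 : ∀ᵐ u ∂(volume.restrict (Ioc a' b')), u ∈ Ioc a' b' :=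
        ae_restrict_mem measurableSet_Ioc
      have h2 : ∀ᵐ u ∂(volume.restrict (Ioc a' b')), u ≠ t := by
        rw [ae_iff]
        have : {u : ℝ | ¬ u ≠ t} = {t} := by ext u; simp
        rw [this]
        exact le_antisymm (le_trans (Measure.restrict_le_self _) (by simp)) zero_le
      filter_upwards [h1, h2] with u hu hut
      exact neg_nonneg.2 (hsign u ⟨lt_of_le_of_lt ha0 hu.1, lt_of_le_of_ne (le_trans hu.2 hbt) hut⟩)
    have hR : ∫⁻ u in Ioc a' b', ((-K' (drsClamp t u)).toNNReal : ENNReal) ∂volume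
        = ENNReal.ofReal (K a' - K b') := by
      have hcongr : ∫⁻ u in Ioc a' b', ((-K' (drsClamp t u)).toNNReal : ENNReal) ∂volume
          = ∫⁻ u in Ioc a' b', ENNReal.ofReal (-K' u) ∂volume := by
        apply setLIntegral_congr_fun measurableSet_Ioc
        intro u hu
        beta_reduce
        rw [drsClamp_eq ⟨le_trans ha0 hu.1.le, le_trans hu.2 hbt⟩]
        rfl
      rw [hcongr, ← ofReal_integral_eq_lintegral_ofReal hint hae]
      congr 1
      rw [← intervalIntegral.integral_of_le hab'.le]
      have : ∫ u in a'..b', -K' u = -(K b' - K a') := by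
        rw [intervalIntegral.integral_neg, drsFTC K K' hK' hK'cont ha0 hab'.le]
      rw [this]; ring
    rw [hL, hR]

set_option maxHeartbeats 2000000 in
lemma drsCore (μ ν : Measure ℝ) [IsProbabilityMeasure μ] [IsProbabilityMeasure ν]
    (hμ0 : μ (Iio 0) = 0) (hν0 : ν (Iio 0) = 0)
    (hνa : ∀ x : ℝ, ν {x} = 0)
    (t : ℝ) (ht : 0 ≤ t)
    (K K' : ℝ → ℝ) (hK0 : K 0 = 1)
    (hK' : ∀ u ∈ Ici (0:ℝ), HasDerivWithinAt K (K' u) (Ici 0) u)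
    (hK'cont : ContinuousOn K' (Ici 0))
    (hKpos : ∀ u ∈ Icc (0:ℝ) t, 0 < K u)
    (lam : ℝ → ℝ) (hlam : ∀ u, lam u = -K' u / K u)
    (g : ℝ → ℝ) (hgcont : Continuous g) (hgpos : ∀ u ∈ Icc (0:ℝ) t, 0 < g u)
    (hmodels : (∀ u ∈ Icc (0:ℝ) t, K u = (ν (Ici u)).toReal)
      ∨ (∀ u ∈ Icc (0:ℝ) t, g u = (μ (Ici u)).toReal)) :
    ∃ G' : ℝ × ℝ → ℝ, Measurable G' ∧ (∃ B : ℝ, ∀ p, ‖G' p‖ ≤ B) ∧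
      (∀ᵐ p ∂(μ.prod ν),
        (if t ≤ min p.1 p.2 then (1:ℝ) else 0) / K t - g t
          + ((if p.2 < p.1 then (1:ℝ) else 0) * (if p.2 ≤ t then (1:ℝ) else 0) * g t
              / (K p.2 * g p.2)
            - ∫ u in (0:ℝ)..(min (min p.1 p.2) t), lam u * g t / (K u * g u)) = G' p) ∧
      ∫ p, G' p ∂(μ.prod ν) = (μ (Ici t)).toReal - g t := by
  -- clamp and clamped functions
  set cl : ℝ → ℝ := drsClamp t with hcl_def
  have hclm : ∀ x, cl x ∈ Icc (0:ℝ) t := drsClamp_mem ht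
  have hcleq : ∀ {x : ℝ}, x ∈ Icc (0:ℝ) t → cl x = x := fun hx => drsClamp_eq hx
  have hclcont : Continuous cl := drsClamp_cont t
  have hKcont : ContinuousOn K (Ici 0) := fun x hx => (hK' x hx).continuousWithinAt
  have hclIci : ∀ x, cl x ∈ Ici (0:ℝ) := fun x => (hclm x).1
  have hKccont : Continuous (fun x => K (cl x)) := hKcont.comp_continuous hclcont hclIci
  have hK'ccont : Continuous (fun x => K' (cl x)) := hK'cont.comp_continuous hclcont hclIci
  have hKcpos : ∀ x, 0 < K (cl x) := fun x => hKpos _ (hclm x)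
  have hgcpos : ∀ x, 0 < g (cl x) := fun x => hgpos _ (hclm x)
  have hKt : 0 < K t := hKpos t ⟨ht, le_refl t⟩
  have hgt : 0 < g t := hgpos t ⟨ht, le_refl t⟩
  set hc : ℝ → ℝ := fun c => g t / (K (cl c) * g (cl c)) with hhc_def
  have hhccont : Continuous hc :=
    continuous_const.div (hKccont.mul (hgcont.comp hclcont))
      (fun x => (mul_pos (hKcpos x) (hgcpos x)).ne')
  set fc : ℝ → ℝ := fun u => -K' (cl u) / K (cl u) * g t / (K (cl u) * g (cl u)) with hfc_def
  have hfccont : Continuous fc := by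
    apply Continuous.div
    · exact (hK'ccont.neg.div hKccont (fun x => (hKcpos x).ne')).mul continuous_const
    · exact hKccont.mul (hgcont.comp hclcont)
    · exact fun x => (mul_pos (hKcpos x) (hgcpos x)).ne'
  set qc : ℝ → ℝ := fun u => -K' (cl u) / (K (cl u))^2 with hqc_def
  have hqccont : Continuous qc :=
    hK'ccont.neg.div (hKccont.pow 2) (fun x => pow_ne_zero _ (hKcpos x).ne')
  set F : ℝ → ℝ := fun x => ∫ u in (0:ℝ)..(cl x), fc u with hF_def
  have hFcont : Continuous F := by
    have h1 : Continuous (fun y => ∫ u in (0:ℝ)..y, fc u) :=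
      intervalIntegral.continuous_primitive (fun a b => hfccont.intervalIntegrable a b) 0
    exact h1.comp hclcont
  -- bounds
  obtain ⟨Cf, hCf⟩ := isCompact_Icc.exists_bound_of_continuousOn
    (hfccont.continuousOn : ContinuousOn fc (Icc 0 t))
  have hCf0 : 0 ≤ Cf := le_trans (norm_nonneg _) (hCf 0 ⟨le_refl 0, ht⟩)
  obtain ⟨Ch, hCh⟩ := isCompact_Icc.exists_bound_of_continuousOn
    (hhccont.continuousOn : ContinuousOn hc (Icc 0 t))
  have hCh0 : 0 ≤ Ch := le_trans (norm_nonneg _) (hCh 0 ⟨le_refl 0, ht⟩)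
  have hChx : ∀ x, ‖hc x‖ ≤ Ch := by
    intro x
    have : hc x = hc (cl x) := by
      simp only [hhc_def]
      rw [hcleq (hclm x)]
    rw [this]; exact hCh _ (hclm x)
  have hFb : ∀ x, ‖F x‖ ≤ Cf * t := by
    intro x
    have hb : ∀ u ∈ Set.uIoc (0:ℝ) (cl x), ‖fc u‖ ≤ Cf := by
      intro u hu
      rw [Set.uIoc_of_le (hclm x).1] at hu
      exact hCf u ⟨hu.1.le, le_trans hu.2 (hclm x).2⟩
    calc ‖F x‖ ≤ Cf * |cl x - 0| := intervalIntegral.norm_integral_le_of_norm_le_const hb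
      _ ≤ Cf * t := by
          rw [sub_zero, abs_of_nonneg (hclm x).1]
          exact mul_le_mul_of_nonneg_left (hclm x).2 hCf0
  -- the pieces
  set g1 : ℝ × ℝ → ℝ := fun p => (Ici t ×ˢ Ici t).indicator (fun _ => (K t)⁻¹) p with hg1_def
  set w : ℝ → ℝ := fun c => (if 0 ≤ c ∧ c ≤ t then (1:ℝ) else 0) * hc c with hw_def
  set g3 : ℝ × ℝ → ℝ := fun p => (if p.2 < p.1 then (1:ℝ) else 0) * w p.2 with hg3_def
  set g4 : ℝ × ℝ → ℝ := fun p => F (min (min p.1 p.2) t) with hg4_def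
  set G' : ℝ × ℝ → ℝ := fun p => g1 p - g t + (g3 p - g4 p) with hG'_def
  have hwmeas : Measurable w := by
    apply Measurable.mul _ hhccont.measurable
    have hs : MeasurableSet {c : ℝ | 0 ≤ c ∧ c ≤ t} := by
      have hset : {c : ℝ | 0 ≤ c ∧ c ≤ t} = Icc 0 t := by ext c; simp [Set.mem_Icc]
      rw [hset]; exact measurableSet_Icc
    exact Measurable.ite hs measurable_const measurable_const
  have hwb : ∀ c, ‖w c‖ ≤ Ch := by
    intro c
    simp only [hw_def]
    rw [norm_mul]
    rcases le_or_gt 0 c with h | h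
    · rcases le_or_gt c t with h2 | h2
      · rw [if_pos ⟨h, h2⟩]; simpa using hChx c
      · rw [if_neg (show ¬(0 ≤ c ∧ c ≤ t) from fun hh => absurd hh.2 (not_le.2 h2))]; simpa using hCh0
    · rw [if_neg (show ¬(0 ≤ c ∧ c ≤ t) from fun hh => absurd hh.1 (not_le.2 h))]; simpa using hCh0
  have hg1meas : Measurable g1 :=
    measurable_const.indicator (measurableSet_Ici.prod measurableSet_Ici)
  have hg3meas : Measurable g3 :=
    (Measurable.ite (measurableSet_lt measurable_snd measurable_fst) measurable_const
      measurable_const).mul (hwmeas.comp measurable_snd)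
  have hg4meas : Measurable g4 :=
    (hFcont.comp ((continuous_fst.min continuous_snd).min continuous_const)).measurable
  have hG'meas : Measurable G' := ((hg1meas.sub measurable_const).add (hg3meas.sub hg4meas))
  have hg1b : ∀ p, ‖g1 p‖ ≤ (K t)⁻¹ := by
    intro p
    simp only [hg1_def]
    by_cases hp : p ∈ Ici t ×ˢ Ici t
    · rw [Set.indicator_of_mem hp]
      rw [Real.norm_eq_abs, abs_of_nonneg (by positivity)]
    · rw [Set.indicator_of_notMem hp]; simp; positivity
  have hg3b : ∀ p, ‖g3 p‖ ≤ Ch := by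
    intro p
    simp only [hg3_def]
    rw [norm_mul]
    rcases lt_or_ge p.2 p.1 with h | h
    · rw [if_pos h]; simpa using hwb p.2
    · rw [if_neg (not_lt.2 h)]; simpa using hCh0
  have hG'b : ∀ p, ‖G' p‖ ≤ (K t)⁻¹ + ‖g t‖ + (Ch + Cf * t) := by
    intro p
    simp only [hG'_def]
    calc ‖g1 p - g t + (g3 p - g4 p)‖ ≤ ‖g1 p - g t‖ + ‖g3 p - g4 p‖ := norm_add_le _ _
      _ ≤ (‖g1 p‖ + ‖g t‖) + (‖g3 p‖ + ‖g4 p‖) :=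
          add_le_add (norm_sub_le _ _) (norm_sub_le _ _)
      _ ≤ ((K t)⁻¹ + ‖g t‖) + (Ch + Cf * t) :=
          add_le_add (add_le_add (hg1b p) (le_refl _))
            (add_le_add (hg3b p) (hFb _))
      _ = (K t)⁻¹ + ‖g t‖ + (Ch + Cf * t) := by ring
  -- a.e. facts on the product
  have haeP : ∀ᵐ p ∂(μ.prod ν), 0 ≤ p.1 := by
    rw [ae_iff]
    have hs : {p : ℝ × ℝ | ¬ 0 ≤ p.1} = Iio 0 ×ˢ (Set.univ : Set ℝ) := by
      ext p; simp [not_le]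
    rw [hs, Measure.prod_prod, hμ0, zero_mul]
  have haeQ : ∀ᵐ p ∂(μ.prod ν), 0 ≤ p.2 := by
    rw [ae_iff]
    have hs : {p : ℝ × ℝ | ¬ 0 ≤ p.2} = (Set.univ : Set ℝ) ×ˢ Iio 0 := by
      ext p; simp [not_le]
    rw [hs, Measure.prod_prod, hν0, mul_zero]
  -- a.e. equality with the original expression
  have haeEq : ∀ᵐ p ∂(μ.prod ν),
      (if t ≤ min p.1 p.2 then (1:ℝ) else 0) / K t - g t
        + ((if p.2 < p.1 then (1:ℝ) else 0) * (if p.2 ≤ t then (1:ℝ) else 0) * g t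
            / (K p.2 * g p.2)
          - ∫ u in (0:ℝ)..(min (min p.1 p.2) t), lam u * g t / (K u * g u)) = G' p := by
    filter_upwards [haeP, haeQ] with p hp1 hp2
    have hm : min (min p.1 p.2) t ∈ Icc (0:ℝ) t :=
      ⟨le_min (le_min hp1 hp2) ht, min_le_right _ _⟩
    have e1 : (if t ≤ min p.1 p.2 then (1:ℝ) else 0) / K t = g1 p := by
      simp only [hg1_def]
      by_cases h : t ≤ min p.1 p.2
      · rw [if_pos h, Set.indicator_of_mem (by
          rw [le_min_iff] at h
          exact Set.mem_prod.2 ⟨h.1, h.2⟩)]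
        rw [one_div]
      · rw [if_neg h, Set.indicator_of_notMem (by
          intro hmem
          rw [Set.mem_prod] at hmem
          exact h (le_min hmem.1 hmem.2))]
        rw [zero_div]
    have e3 : (if p.2 < p.1 then (1:ℝ) else 0) * (if p.2 ≤ t then (1:ℝ) else 0) * g t
        / (K p.2 * g p.2) = g3 p := by
      simp only [hg3_def, hw_def]
      by_cases hct : p.2 ≤ t
      · rw [if_pos hct, if_pos (show 0 ≤ p.2 ∧ p.2 ≤ t from ⟨hp2, hct⟩)]
        simp only [hhc_def]
        rw [hcleq ⟨hp2, hct⟩]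
        ring
      · rw [if_neg hct, if_neg (show ¬(0 ≤ p.2 ∧ p.2 ≤ t) from fun hh => hct hh.2)]
        ring
    have e4 : ∫ u in (0:ℝ)..(min (min p.1 p.2) t), lam u * g t / (K u * g u)
        = g4 p := by
      simp only [hg4_def, hF_def]
      rw [hcleq hm]
      apply intervalIntegral.integral_congr
      intro u hu
      rw [Set.uIcc_of_le hm.1] at hu
      have hu' : u ∈ Icc (0:ℝ) t := ⟨hu.1, le_trans hu.2 hm.2⟩
      simp only [hfc_def]
      rw [hcleq hu', hlam]
    rw [e1, e3, e4]
  refine ⟨G', hG'meas, ⟨(K t)⁻¹ + ‖g t‖ + (Ch + Cf * t), hG'b⟩, haeEq, ?_⟩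
  -- Integral computation
  have intb : ∀ (f : ℝ × ℝ → ℝ), Measurable f → ∀ B : ℝ, (∀ p, ‖f p‖ ≤ B) →
      Integrable f (μ.prod ν) := fun f hm B hB =>
    (integrable_const B).mono' hm.aestronglyMeasurable (ae_of_all _ hB)
  have int1 : Integrable g1 (μ.prod ν) := intb g1 hg1meas _ hg1b
  have int3 : Integrable g3 (μ.prod ν) := intb g3 hg3meas _ hg3b
  have int4 : Integrable g4 (μ.prod ν) := intb g4 hg4meas _ (fun p => hFb _)
  have hconst : ∫ _p, (g t : ℝ) ∂(μ.prod ν) = g t := by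
    rw [integral_const]; simp
  have hsplit : ∫ p, G' p ∂(μ.prod ν)
      = (∫ p, g1 p ∂(μ.prod ν) - g t)
        + (∫ p, g3 p ∂(μ.prod ν) - ∫ p, g4 p ∂(μ.prod ν)) := by
    have h1 : ∫ p, G' p ∂(μ.prod ν)
        = ∫ p, (g1 p - g t) + (g3 p - g4 p) ∂(μ.prod ν) := rfl
    have intA : Integrable (fun p => g1 p - g t) (μ.prod ν) := int1.sub (integrable_const _)
    have intB : Integrable (fun p => g3 p - g4 p) (μ.prod ν) := int3.sub int4
    rw [h1, integral_add intA intB, integral_sub int1 (integrable_const _),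
      integral_sub int3 int4, hconst]
  have hI1 : ∫ p, g1 p ∂(μ.prod ν)
      = (μ (Ici t)).toReal * (ν (Ici t)).toReal * (K t)⁻¹ := by
    simp only [hg1_def]
    rw [integral_indicator_const _ (measurableSet_Ici.prod measurableSet_Ici),
      measureReal_def, Measure.prod_prod, ENNReal.toReal_mul, smul_eq_mul]
  have hI3 : ∫ p, g3 p ∂(μ.prod ν) = ∫ c, (μ (Ioi c)).toReal * w c ∂ν := by
    rw [integral_prod_symm _ int3]
    refine integral_congr_ae (ae_of_all _ fun c => ?_)
    simp only [hg3_def]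
    rw [integral_mul_const, drsIndInt μ c]
  -- the restricted Lebesgue measure on (0, t]
  haveI hfinvr : IsFiniteMeasure (volume.restrict (Ioc (0:ℝ) t)) :=
    ⟨by rw [Measure.restrict_apply_univ]; exact measure_Ioc_lt_top⟩
  have haevolIoc : ∀ᵐ u ∂(volume.restrict (Ioc (0:ℝ) t)), u ∈ Ioc (0:ℝ) t :=
    ae_restrict_mem measurableSet_Ioc
  have haevolt : ∀ᵐ u ∂(volume.restrict (Ioc (0:ℝ) t)), u ≠ t := by
    rw [ae_iff]
    have hset : {u : ℝ | ¬ u ≠ t} = {t} := by ext u; simp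
    rw [hset]
    exact le_antisymm (le_trans (Measure.restrict_le_self _) (by simp)) zero_le
  -- I4 via Fubini
  have hptI4 : ∀ᵐ p ∂(μ.prod ν),
      g4 p = ∫ u, (Iio (min p.1 p.2)).indicator fc u ∂(volume.restrict (Ioc (0:ℝ) t)) := by
    filter_upwards [haeP, haeQ] with p hp1 hp2
    have hm0 : 0 ≤ min (min p.1 p.2) t := le_min (le_min hp1 hp2) ht
    simp only [hg4_def, hF_def]
    rw [hcleq ⟨hm0, min_le_right _ _⟩, setIntegral_indicator measurableSet_Iio]
    rcases le_or_gt (min p.1 p.2) t with hmt | hmt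
    · have hmin : min (min p.1 p.2) t = min p.1 p.2 := min_eq_left hmt
      have hseteq : Ioc (0:ℝ) t ∩ Iio (min p.1 p.2) = Ioo 0 (min p.1 p.2) := by
        ext u
        simp only [Set.mem_inter_iff, mem_Ioc, mem_Iio, mem_Ioo]
        constructor
        · rintro ⟨⟨h1, _⟩, h3⟩; exact ⟨h1, h3⟩
        · rintro ⟨h1, h2⟩; exact ⟨⟨h1, le_trans h2.le hmt⟩, h2⟩
      rw [hseteq, hmin, intervalIntegral.integral_of_le (le_min hp1 hp2),
        integral_Ioc_eq_integral_Ioo]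
    · have hmin : min (min p.1 p.2) t = t := min_eq_right hmt.le
      have hseteq : Ioc (0:ℝ) t ∩ Iio (min p.1 p.2) = Ioc 0 t := by
        apply Set.inter_eq_self_of_subset_left
        intro u hu
        exact lt_of_le_of_lt hu.2 hmt
      rw [hseteq, hmin, intervalIntegral.integral_of_le ht]
  have haeq2 : ∀ᵐ q ∂((μ.prod ν).prod (volume.restrict (Ioc (0:ℝ) t))),
      q.2 ∈ Ioc (0:ℝ) t := by
    rw [ae_iff]
    have hset : {q : (ℝ × ℝ) × ℝ | ¬ q.2 ∈ Ioc (0:ℝ) t}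
        = (Set.univ : Set (ℝ × ℝ)) ×ˢ (Ioc (0:ℝ) t)ᶜ := by
      ext q; simp
    rw [hset, Measure.prod_prod]
    have : (volume.restrict (Ioc (0:ℝ) t)) ((Ioc (0:ℝ) t)ᶜ) = 0 := by
      rw [Measure.restrict_apply (measurableSet_Ioc.compl)]
      simp
    rw [this, mul_zero]
  have hswap : ∫ p, (∫ u, (Iio (min p.1 p.2)).indicator fc u
        ∂(volume.restrict (Ioc (0:ℝ) t))) ∂(μ.prod ν)
      = ∫ u, (∫ p, (Iio (min p.1 p.2)).indicator fc u ∂(μ.prod ν))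
          ∂(volume.restrict (Ioc (0:ℝ) t)) := by
    apply integral_integral_swap
    have hmeas : Measurable (Function.uncurry
        (fun (p : ℝ × ℝ) (u : ℝ) => (Iio (min p.1 p.2)).indicator fc u)) := by
      have huc : (Function.uncurry
          (fun (p : ℝ × ℝ) (u : ℝ) => (Iio (min p.1 p.2)).indicator fc u))
          = fun q : (ℝ × ℝ) × ℝ => if q.2 < min q.1.1 q.1.2 then fc q.2 else 0 := by
        funext q
        simp [Function.uncurry, Set.indicator_apply, mem_Iio]
      rw [huc]
      exact Measurable.ite
        (measurableSet_lt measurable_snd ((measurable_fst.fst).min (measurable_fst.snd)))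
        (hfccont.measurable.comp measurable_snd) measurable_const
    apply (integrable_const Cf).mono' hmeas.aestronglyMeasurable
    filter_upwards [haeq2] with q hq
    simp only [Function.uncurry]
    by_cases h : q.2 ∈ Iio (min q.1.1 q.1.2)
    · rw [Set.indicator_of_mem h]
      exact hCf _ ⟨hq.1.le, hq.2⟩
    · rw [Set.indicator_of_notMem h]
      simpa using hCf0
  have hinner4 : ∀ u : ℝ, ∫ p, (Iio (min p.1 p.2)).indicator fc u ∂(μ.prod ν)
      = (μ (Ioi u)).toReal * (ν (Ioi u)).toReal * fc u := by
    intro u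
    have heq : (fun p : ℝ × ℝ => (Iio (min p.1 p.2)).indicator fc u)
        = fun p => (Ioi u ×ˢ Ioi u).indicator (fun _ => fc u) p := by
      funext p
      by_cases h : u < min p.1 p.2
      · rw [Set.indicator_of_mem (mem_Iio.2 h), Set.indicator_of_mem (by
          rw [lt_min_iff] at h
          exact Set.mem_prod.2 ⟨h.1, h.2⟩)]
      · rw [Set.indicator_of_notMem (by simpa using h), Set.indicator_of_notMem (by
          intro hmem
          rw [Set.mem_prod] at hmem
          exact h (lt_min_iff.2 ⟨hmem.1, hmem.2⟩))]
    rw [heq, integral_indicator_const _ (measurableSet_Ioi.prod measurableSet_Ioi),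
      measureReal_def, Measure.prod_prod, ENNReal.toReal_mul, smul_eq_mul]
  have hI4 : ∫ p, g4 p ∂(μ.prod ν)
      = ∫ u, (μ (Ioi u)).toReal * (ν (Ioi u)).toReal * fc u
          ∂(volume.restrict (Ioc (0:ℝ) t)) := by
    rw [integral_congr_ae hptI4, hswap]
    exact integral_congr_ae (ae_of_all _ fun u => hinner4 u)
  -- measurability of survival functions
  have hSmuMeas : Measurable (fun u : ℝ => (μ (Ioi u)).toReal) :=
    Antitone.measurable (fun a b hab =>
      ENNReal.toReal_mono (measure_ne_top μ _) (measure_mono (Ioi_subset_Ioi hab)))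
  have hSnuMeas : Measurable (fun u : ℝ => (ν (Ioi u)).toReal) :=
    Antitone.measurable (fun a b hab =>
      ENNReal.toReal_mono (measure_ne_top ν _) (measure_mono (Ioi_subset_Ioi hab)))
  have hSmuB : ∀ u : ℝ, (μ (Ioi u)).toReal ≤ 1 := by
    intro u
    have := ENNReal.toReal_mono (measure_ne_top μ Set.univ) (measure_mono (Set.subset_univ (Ioi u)))
    simpa using this
  have hSnuB : ∀ u : ℝ, (ν (Ioi u)).toReal ≤ 1 := by
    intro u
    have := ENNReal.toReal_mono (measure_ne_top ν Set.univ) (measure_mono (Set.subset_univ (Ioi u)))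
    simpa using this
  have haeν0 : ∀ᵐ c ∂ν, c ≠ (0:ℝ) := by
    rw [ae_iff]
    have hset : {c : ℝ | ¬ c ≠ 0} = {(0:ℝ)} := by ext c; simp
    rw [hset]
    exact hνa 0
  rw [hsplit, hI1, hI3, hI4]
  rcases hmodels with hKmod | hgmod
  · -- censoring model correct
    have hνIoiK : ∀ u ∈ Icc (0:ℝ) t, (ν (Ioi u)).toReal = K u := by
      intro u hu
      rw [← drsIciIoi ν hνa u]
      exact (hKmod u hu).symm
    have hanti : ∀ x ∈ Icc (0:ℝ) t, ∀ y ∈ Icc (0:ℝ) t, x ≤ y → K y ≤ K x := by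
      intro x hx y hy hxy
      rw [hKmod x hx, hKmod y hy]
      exact ENNReal.toReal_mono (measure_ne_top ν _) (measure_mono (Ici_subset_Ici.2 hxy))
    have hsign : ∀ x ∈ Ioo (0:ℝ) t, K' x ≤ 0 := fun x hx =>
      drsDerivNonpos K K' t hK' hanti hx
    -- I3 = I4
    have hI3indic : ∫ c, (μ (Ioi c)).toReal * w c ∂ν
        = ∫ c, (Ioc (0:ℝ) t).indicator (fun c => (μ (Ioi c)).toReal * hc c) c ∂ν := by
      apply integral_congr_ae
      filter_upwards [haeν0] with c hc0
      simp only [hw_def]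
      by_cases h : 0 ≤ c ∧ c ≤ t
      · rw [if_pos h, Set.indicator_of_mem
          (show c ∈ Ioc (0:ℝ) t from ⟨lt_of_le_of_ne h.1 (Ne.symm hc0), h.2⟩)]
        ring
      · rw [if_neg h, Set.indicator_of_notMem
          (show c ∉ Ioc (0:ℝ) t from fun hmem => h ⟨hmem.1.le, hmem.2⟩)]
        ring
    have hdens : Measurable (fun u : ℝ => Real.toNNReal (-K' (drsClamp t u))) :=
      (hK'ccont.neg.measurable).real_toNNReal
    have hI3w : ∫ c, (μ (Ioi c)).toReal * w c ∂ν
        = ∫ u, (Real.toNNReal (-K' (drsClamp t u)))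
            • ((μ (Ioi u)).toReal * hc u) ∂(volume.restrict (Ioc (0:ℝ) t)) := by
      rw [hI3indic, integral_indicator measurableSet_Ioc,
        drsMeasEq ν hνa t ht K K' hK' hK'cont hKmod,
        integral_withDensity_eq_integral_smul hdens]
    have hI34 : ∫ c, (μ (Ioi c)).toReal * w c ∂ν
        = ∫ u, (μ (Ioi u)).toReal * (ν (Ioi u)).toReal * fc u
            ∂(volume.restrict (Ioc (0:ℝ) t)) := by
      rw [hI3w]
      apply integral_congr_ae
      filter_upwards [haevolIoc, haevolt] with u hu hut
      have huo : u ∈ Ioo (0:ℝ) t := ⟨hu.1, lt_of_le_of_ne hu.2 hut⟩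
      have hum : u ∈ Icc (0:ℝ) t := ⟨hu.1.le, hu.2⟩
      have hclu : cl u = u := hcleq hum
      have hclu' : drsClamp t u = u := hclu
      rw [NNReal.smul_def, hclu', Real.coe_toNNReal _ (neg_nonneg.2 (hsign u huo))]
      simp only [hhc_def, hfc_def]
      rw [hclu, hνIoiK u hum]
      have hKu : K u ≠ 0 := (hKpos u hum).ne'
      have hgu : g u ≠ 0 := (hgpos u hum).ne'
      field_simp
      have e1 : K u * (K u)⁻¹ = 1 := mul_inv_cancel₀ hKu
      have e2 : g u * (g u)⁻¹ = 1 := mul_inv_cancel₀ hgu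
      linear_combination (-((g u * (g u)⁻¹) * ((μ (Ioi u)).toReal * g t * K' u))) * e1
        - ((μ (Ioi u)).toReal * g t * K' u) * e2
    rw [hI34, sub_self, add_zero, ← hKmod t ⟨ht, le_refl t⟩,
      mul_assoc, mul_inv_cancel₀ hKt.ne', mul_one]
  · -- outcome model correct
    have hgt_eq : (μ (Ici t)).toReal = g t := (hgmod t ⟨ht, le_refl t⟩).symm
    have hDc : {x : ℝ | μ {x} ≠ 0}.Countable := by
      have h := Measure.countable_meas_pos_of_disjoint_iUnion
        (μ := μ) (As := fun x : ℝ => {x})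
        (fun x => measurableSet_singleton x)
        (fun a b hab => by
          simp only [Function.onFun]
          exact Set.disjoint_singleton.2 hab)
      have hset : {x : ℝ | μ {x} ≠ 0} = {i : ℝ | 0 < μ {i}} := by
        ext x; simp [pos_iff_ne_zero]
      rw [hset]; exact h
    haveI : NoAtoms ν := ⟨hνa⟩
    have hνD : ν {x : ℝ | μ {x} ≠ 0} = 0 := by haveI : NullSingletonClass ν := ⟨hνa⟩; exact hDc.measure_zero ν
    have hvolD : (volume.restrict (Ioc (0:ℝ) t)) {x : ℝ | μ {x} ≠ 0} = 0 :=
      le_antisymm (le_trans (Measure.restrict_le_self _)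
        (le_of_eq (hDc.measure_zero _))) zero_le
    have haeνD : ∀ᵐ c ∂ν, μ {c} = 0 := by
      rw [ae_iff]; simpa using hνD
    have haevolD : ∀ᵐ u ∂(volume.restrict (Ioc (0:ℝ) t)), μ {u} = 0 := by
      rw [ae_iff]; simpa using hvolD
    haveI hfinνr : IsFiniteMeasure (ν.restrict (Ioc (0:ℝ) t)) :=
      ⟨by rw [Measure.restrict_apply_univ]; exact measure_lt_top ν _⟩
    -- global bound for qc
    obtain ⟨Cq, hCq⟩ := isCompact_Icc.exists_bound_of_continuousOn
      (hqccont.continuousOn : ContinuousOn qc (Icc 0 t))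
    have hCq0 : 0 ≤ Cq := le_trans (norm_nonneg _) (hCq 0 ⟨le_refl 0, ht⟩)
    have hCqx : ∀ x, ‖qc x‖ ≤ Cq := by
      intro x
      have hq : qc x = qc (cl x) := by
        simp only [hqc_def]
        rw [hcleq (hclm x)]
      rw [hq]; exact hCq _ (hclm x)
    -- FTC for 1/K on (0, c]
    set q2 : ℝ → ℝ → ℝ := fun c u => if u < c then qc u else 0 with hq2_def
    have hq2ind : ∀ c : ℝ, (fun u => q2 c u) = fun u => (Iio c).indicator qc u := by
      intro c
      funext u
      simp [hq2_def, Set.indicator_apply, mem_Iio]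
    have hKinvEq : ∀ c ∈ Ioc (0:ℝ) t, (K (cl c))⁻¹
        = 1 + ∫ u, q2 c u ∂(volume.restrict (Ioc (0:ℝ) t)) := by
      intro c hcm
      have hc' : c ∈ Icc (0:ℝ) t := ⟨hcm.1.le, hcm.2⟩
      have hftc : ∫ u in (0:ℝ)..c, -K' u / (K u)^2 = (K c)⁻¹ - 1 := by
        rw [drsFTCinv K K' t hK' hK'cont hKpos (le_refl 0) hcm.1.le hcm.2, hK0, inv_one]
      have hcongr : ∫ u in (0:ℝ)..c, -K' u / (K u)^2 = ∫ u in (0:ℝ)..c, qc u := by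
        apply intervalIntegral.integral_congr
        intro u hu
        rw [Set.uIcc_of_le hcm.1.le] at hu
        have hu' : u ∈ Icc (0:ℝ) t := ⟨hu.1, le_trans hu.2 hcm.2⟩
        simp only [hqc_def]
        rw [hcleq hu']
      have hind : ∫ u, q2 c u ∂(volume.restrict (Ioc (0:ℝ) t))
          = ∫ u in (0:ℝ)..c, qc u := by
        rw [hq2ind c, setIntegral_indicator measurableSet_Iio]
        have hseteq : Ioc (0:ℝ) t ∩ Iio c = Ioo 0 c := by
          ext u
          simp only [Set.mem_inter_iff, mem_Ioc, mem_Iio, mem_Ioo]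
          constructor
          · rintro ⟨⟨h1, _⟩, h3⟩; exact ⟨h1, h3⟩
          · rintro ⟨h1, h2⟩; exact ⟨⟨h1, le_trans h2.le hcm.2⟩, h2⟩
        rw [hseteq, intervalIntegral.integral_of_le hcm.1.le, integral_Ioc_eq_integral_Ioo]
      rw [hind, ← hcongr, hftc, hcleq hc']
      ring
    have hqmeas2 : Measurable (Function.uncurry q2) := by
      have huc : Function.uncurry q2 = fun q : ℝ × ℝ => if q.2 < q.1 then qc q.2 else 0 := by
        funext q; simp [hq2_def, Function.uncurry]
      rw [huc]
      exact Measurable.ite (measurableSet_lt measurable_snd measurable_fst)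
        (hqccont.measurable.comp measurable_snd) measurable_const
    have hintq : Integrable (Function.uncurry q2)
        ((ν.restrict (Ioc (0:ℝ) t)).prod (volume.restrict (Ioc (0:ℝ) t))) := by
      apply (integrable_const Cq).mono' hqmeas2.aestronglyMeasurable
      apply ae_of_all
      intro q
      simp only [Function.uncurry, hq2_def]
      by_cases h : q.2 < q.1
      · rw [if_pos h]; exact hCqx q.2
      · rw [if_neg h]; simpa using hCq0
    have hJν : ∫ c, (K (cl c))⁻¹ ∂(ν.restrict (Ioc (0:ℝ) t))
        = (ν (Ioc (0:ℝ) t)).toReal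
          + ∫ u, qc u * ((ν.restrict (Ioc (0:ℝ) t)) (Ioi u)).toReal
              ∂(volume.restrict (Ioc (0:ℝ) t)) := by
      have h1 : ∫ c, (K (cl c))⁻¹ ∂(ν.restrict (Ioc (0:ℝ) t))
          = ∫ c, (1 + ∫ u, q2 c u ∂(volume.restrict (Ioc (0:ℝ) t)))
              ∂(ν.restrict (Ioc (0:ℝ) t)) := by
        apply integral_congr_ae
        filter_upwards [ae_restrict_mem measurableSet_Ioc] with c hcm
        exact hKinvEq c hcm
      have hinner_int : Integrable
          (fun c => ∫ u, q2 c u ∂(volume.restrict (Ioc (0:ℝ) t)))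
          (ν.restrict (Ioc (0:ℝ) t)) := hintq.integral_prod_left
      have h2 : ∫ _c, (1:ℝ) ∂(ν.restrict (Ioc (0:ℝ) t)) = (ν (Ioc (0:ℝ) t)).toReal := by
        rw [integral_const, smul_eq_mul, mul_one, measureReal_def, Measure.restrict_apply_univ]
      have h3 : ∫ c, (∫ u, q2 c u ∂(volume.restrict (Ioc (0:ℝ) t)))
            ∂(ν.restrict (Ioc (0:ℝ) t))
          = ∫ u, qc u * ((ν.restrict (Ioc (0:ℝ) t)) (Ioi u)).toReal
              ∂(volume.restrict (Ioc (0:ℝ) t)) := by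
        rw [integral_integral_swap hintq]
        apply integral_congr_ae
        apply ae_of_all
        intro u
        have hpt : ∀ c : ℝ, q2 c u = (if u < c then (1:ℝ) else 0) * qc u := by
          intro c
          simp only [hq2_def]
          by_cases h : u < c
          · rw [if_pos h, if_pos h, one_mul]
          · rw [if_neg h, if_neg h, zero_mul]
        calc ∫ c, q2 c u ∂(ν.restrict (Ioc (0:ℝ) t))
            = ∫ c, (if u < c then (1:ℝ) else 0) * qc u ∂(ν.restrict (Ioc (0:ℝ) t)) :=
              integral_congr_ae (ae_of_all _ hpt)
          _ = qc u * ((ν.restrict (Ioc (0:ℝ) t)) (Ioi u)).toReal := by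
              rw [integral_mul_const, drsIndInt _ u, mul_comm]
      rw [h1, integral_add (integrable_const 1) hinner_int, h2, h3]
    have hννres : ∀ u ∈ Ioc (0:ℝ) t, ((ν.restrict (Ioc (0:ℝ) t)) (Ioi u)).toReal
        = (ν (Ioi u)).toReal - (ν (Ioi t)).toReal := by
      intro u hu
      rw [Measure.restrict_apply measurableSet_Ioi]
      have hseteq : Ioi u ∩ Ioc (0:ℝ) t = Ioc u t := by
        ext z
        simp only [Set.mem_inter_iff, mem_Ioi, mem_Ioc]
        constructor
        · rintro ⟨h1, _, h3⟩; exact ⟨h1, h3⟩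
        · rintro ⟨h1, h2⟩; exact ⟨h1, lt_trans hu.1 h1, h2⟩
      have hdiff : Ioc u t = Ioi u \ Ioi t := by
        ext z; simp only [mem_Ioc, Set.mem_diff, mem_Ioi, not_lt]
      rw [hseteq, hdiff,
        measure_diff (Ioi_subset_Ioi hu.2) measurableSet_Ioi.nullMeasurableSet
          (measure_ne_top ν _),
        ENNReal.toReal_sub_of_le (measure_mono (Ioi_subset_Ioi hu.2)) (measure_ne_top ν _)]
    have hqint : ∫ u, qc u ∂(volume.restrict (Ioc (0:ℝ) t)) = (K t)⁻¹ - 1 := by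
      have hcongr : ∫ u in (0:ℝ)..t, qc u = ∫ u in (0:ℝ)..t, -K' u / (K u)^2 := by
        apply intervalIntegral.integral_congr
        intro u hu
        rw [Set.uIcc_of_le ht] at hu
        simp only [hqc_def]
        rw [hcleq hu]
      rw [← intervalIntegral.integral_of_le ht, hcongr,
        drsFTCinv K K' t hK' hK'cont hKpos (le_refl 0) ht (le_refl t), hK0, inv_one]
    have hqcint : Integrable qc (volume.restrict (Ioc (0:ℝ) t)) :=
      (integrable_const Cq).mono' hqccont.measurable.aestronglyMeasurable
        (ae_of_all _ hCqx)
    have hintqSnu : Integrable (fun u => qc u * (ν (Ioi u)).toReal)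
        (volume.restrict (Ioc (0:ℝ) t)) := by
      apply (integrable_const Cq).mono'
        (hqccont.measurable.mul hSnuMeas).aestronglyMeasurable
      apply ae_of_all
      intro u
      rw [Pi.mul_apply, norm_mul]
      calc ‖qc u‖ * ‖(ν (Ioi u)).toReal‖ ≤ Cq * 1 := by
            apply mul_le_mul (hCqx u) _ (norm_nonneg _) hCq0
            rw [Real.norm_eq_abs, abs_of_nonneg ENNReal.toReal_nonneg]
            exact hSnuB u
        _ = Cq := mul_one Cq
    have hsplitq : ∫ u, qc u * ((ν.restrict (Ioc (0:ℝ) t)) (Ioi u)).toReal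
          ∂(volume.restrict (Ioc (0:ℝ) t))
        = ∫ u, qc u * (ν (Ioi u)).toReal ∂(volume.restrict (Ioc (0:ℝ) t))
          - ((K t)⁻¹ - 1) * (ν (Ioi t)).toReal := by
      have h1 : ∫ u, qc u * ((ν.restrict (Ioc (0:ℝ) t)) (Ioi u)).toReal
            ∂(volume.restrict (Ioc (0:ℝ) t))
          = ∫ u, (qc u * (ν (Ioi u)).toReal - qc u * (ν (Ioi t)).toReal)
              ∂(volume.restrict (Ioc (0:ℝ) t)) := by
        apply integral_congr_ae
        filter_upwards [haevolIoc] with u hu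
        rw [hννres u hu]
        ring
      rw [h1, integral_sub hintqSnu (hqcint.mul_const _), integral_mul_const, hqint]
    have hI3ii : ∫ c, (μ (Ioi c)).toReal * w c ∂ν
        = g t * ∫ c, (K (cl c))⁻¹ ∂(ν.restrict (Ioc (0:ℝ) t)) := by
      have hcong : ∀ᵐ c ∂ν, (μ (Ioi c)).toReal * w c
          = (Ioc (0:ℝ) t).indicator (fun c => g t * (K (cl c))⁻¹) c := by
        filter_upwards [haeν0, haeνD] with c hc0 hcD
        simp only [hw_def]
        by_cases h : 0 ≤ c ∧ c ≤ t
        · have hmem : c ∈ Ioc (0:ℝ) t := ⟨lt_of_le_of_ne h.1 (Ne.symm hc0), h.2⟩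
          rw [if_pos h, Set.indicator_of_mem hmem]
          have hgc : g c = (μ (Ioi c)).toReal := by
            rw [hgmod c h, drsIciIoi1 μ c hcD]
          simp only [hhc_def]
          rw [hcleq h, ← hgc]
          have hKc : K c ≠ 0 := (hKpos c h).ne'
          have hgc0 : g c ≠ 0 := (hgpos c h).ne'
          field_simp
          try ring
        · rw [if_neg h, Set.indicator_of_notMem
            (show c ∉ Ioc (0:ℝ) t from fun hmem => h ⟨hmem.1.le, hmem.2⟩)]
          ring
      rw [integral_congr_ae hcong, integral_indicator measurableSet_Ioc, integral_const_mul]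
    have hI4ii : ∫ u, (μ (Ioi u)).toReal * (ν (Ioi u)).toReal * fc u
          ∂(volume.restrict (Ioc (0:ℝ) t))
        = g t * ∫ u, qc u * (ν (Ioi u)).toReal ∂(volume.restrict (Ioc (0:ℝ) t)) := by
      rw [← integral_const_mul]
      apply integral_congr_ae
      filter_upwards [haevolIoc, haevolD] with u hu huD
      have hum : u ∈ Icc (0:ℝ) t := ⟨hu.1.le, hu.2⟩
      have hgu : g u = (μ (Ioi u)).toReal := by
        rw [hgmod u hum, drsIciIoi1 μ u huD]
      simp only [hfc_def, hqc_def]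
      rw [hcleq hum, ← hgu]
      have hKu : K u ≠ 0 := (hKpos u hum).ne'
      have hgu0 : g u ≠ 0 := (hgpos u hum).ne'
      field_simp
    have hν1 : (ν (Ioc (0:ℝ) t)).toReal = 1 - (ν (Ioi t)).toReal := by
      have hdiff : Ioc (0:ℝ) t = Ioi 0 \ Ioi t := by
        ext z; simp only [mem_Ioc, Set.mem_diff, mem_Ioi, not_lt]
      have hν00 : ν (Ioi (0:ℝ)) = 1 := by
        rw [← drsIciIoi1 ν 0 (hνa 0)]
        have hcompl : Ici (0:ℝ) = (Iio 0)ᶜ := Set.compl_Iio.symm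
        rw [hcompl, prob_compl_eq_one_sub measurableSet_Iio, hν0, tsub_zero]
      rw [hdiff,
        measure_diff (Ioi_subset_Ioi ht) measurableSet_Ioi.nullMeasurableSet
          (measure_ne_top ν _),
        ENNReal.toReal_sub_of_le (measure_mono (Ioi_subset_Ioi ht)) (measure_ne_top ν _),
        hν00, ENNReal.toReal_one]
    have hνIcit : (ν (Ici t)).toReal = (ν (Ioi t)).toReal := by
      rw [drsIciIoi1 ν t (hνa t)]
    rw [hI3ii, hI4ii, hJν, hsplitq, hν1, hνIcit, hgt_eq]
    ring

set_option maxHeartbeats 1000000 in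
/-- **Proposition 2 (double robustness, single-observation form).**  If either the working
censoring survival model `K` or the working outcome survival model `g` is correctly
specified on `[0,t]`, then the doubly robust score `φ` is integrable with
`E[φ] = P(T ≥ t)`. -/
theorem doubly_robust_score_unbiased
    {Ω : Type*} [MeasurableSpace Ω] (P : Measure Ω) [IsProbabilityMeasure P]
    (A : Ω → ℝ) (hAmeas : Measurable A) (hA01 : ∀ ω, A ω = 0 ∨ A ω = 1)
    (T C : Ω → ℝ) (hT : Measurable T) (hC : Measurable C)
    (hAindep : IndepFun A (fun ω => (T ω, C ω)) P)
    (hTC : IndepFun T C P)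
    (hT0 : ∀ᵐ ω ∂P, 0 ≤ T ω) (hC0 : ∀ᵐ ω ∂P, 0 ≤ C ω)
    (hCatomless : ∀ c : ℝ, P {ω | C ω = c} = 0)
    (π : ℝ) (hπ : π = (P {ω | A ω = 1}).toReal) (hπ01 : π ∈ Set.Ioo (0:ℝ) 1)
    (t : ℝ) (ht : 0 ≤ t)
    (K K' : ℝ → ℝ) (hK0 : K 0 = 1)
    (hK' : ∀ u ∈ Set.Ici (0:ℝ), HasDerivWithinAt K (K' u) (Set.Ici 0) u)
    (hK'cont : ContinuousOn K' (Set.Ici 0))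
    (hKpos : ∀ u ∈ Set.Icc (0:ℝ) t, 0 < K u)
    (lam : ℝ → ℝ) (hlam : ∀ u : ℝ, lam u = -K' u / K u)
    (g : ℝ → ℝ) (hgcont : Continuous g) (hgpos : ∀ u ∈ Set.Icc (0:ℝ) t, 0 < g u)
    (U : Ω → ℝ) (hU : ∀ ω, U ω = min (T ω) (C ω))
    (φ : Ω → ℝ)
    (hφ : ∀ ω, φ ω =
      A ω * (if t ≤ U ω then (1:ℝ) else 0) / (π * K t) - ((A ω - π) / π) * g t
        + (A ω / π) *
          ((if C ω < T ω then (1:ℝ) else 0) * (if C ω ≤ t then (1:ℝ) else 0) * g t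
              / (K (C ω) * g (C ω))
            - ∫ u in (0:ℝ)..(min (U ω) t), lam u * g t / (K u * g u)))
    (hmodels : (∀ u ∈ Set.Icc (0:ℝ) t, K u = (P {ω | u ≤ C ω}).toReal)
      ∨ (∀ u ∈ Set.Icc (0:ℝ) t, g u = (P {ω | u ≤ T ω}).toReal)) :
    Integrable φ P ∧ ∫ ω, φ ω ∂P = (P {ω | t ≤ T ω}).toReal := by
  obtain ⟨hπpos, hπlt⟩ := hπ01
  have hπne : π ≠ 0 := ne_of_gt hπpos
  have hKt : 0 < K t := hKpos t ⟨ht, le_refl t⟩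
  have hKtne : K t ≠ 0 := hKt.ne'
  set μ := P.map T with hμdef
  set ν := P.map C with hνdef
  haveI : IsProbabilityMeasure μ := Measure.isProbabilityMeasure_map hT.aemeasurable
  haveI : IsProbabilityMeasure ν := Measure.isProbabilityMeasure_map hC.aemeasurable
  have hμ0 : μ (Set.Iio 0) = 0 := by
    rw [hμdef, Measure.map_apply hT measurableSet_Iio]
    rw [ae_iff] at hT0
    have hset : T ⁻¹' (Set.Iio 0) = {ω | ¬ 0 ≤ T ω} := by ext ω; simp [not_le]
    rw [hset]; exact hT0
  have hν0 : ν (Set.Iio 0) = 0 := by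
    rw [hνdef, Measure.map_apply hC measurableSet_Iio]
    rw [ae_iff] at hC0
    have hset : C ⁻¹' (Set.Iio 0) = {ω | ¬ 0 ≤ C ω} := by ext ω; simp [not_le]
    rw [hset]; exact hC0
  have hνa : ∀ x : ℝ, ν {x} = 0 := by
    intro x
    rw [hνdef, Measure.map_apply hC (measurableSet_singleton x)]
    exact hCatomless x
  have hIciC : ∀ u : ℝ, P {ω | u ≤ C ω} = ν (Set.Ici u) := by
    intro u
    rw [hνdef, Measure.map_apply hC measurableSet_Ici]
    rfl
  have hIciT : ∀ u : ℝ, P {ω | u ≤ T ω} = μ (Set.Ici u) := by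
    intro u
    rw [hμdef, Measure.map_apply hT measurableSet_Ici]
    rfl
  have hmodels' : (∀ u ∈ Set.Icc (0:ℝ) t, K u = (ν (Set.Ici u)).toReal)
      ∨ (∀ u ∈ Set.Icc (0:ℝ) t, g u = (μ (Set.Ici u)).toReal) := by
    rcases hmodels with h | h
    · left; intro u hu; rw [h u hu, hIciC u]
    · right; intro u hu; rw [h u hu, hIciT u]
  obtain ⟨G', hG'meas, ⟨B, hB⟩, haeEq, hIntEq⟩ :=
    drsCore μ ν hμ0 hν0 hνa t ht K K' hK0 hK' hK'cont hKpos lam hlam g hgcont hgpos hmodels'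
  have hB0 : 0 ≤ B := le_trans (norm_nonneg _) (hB (0, 0))
  have hpairMeas : Measurable (fun ω => (T ω, C ω)) := hT.prodMk hC
  have hmap : P.map (fun ω => (T ω, C ω)) = μ.prod ν :=
    (ProbabilityTheory.indepFun_iff_map_prod_eq_prod_map_map
      hT.aemeasurable hC.aemeasurable).mp hTC
  have haeEqP : ∀ᵐ ω ∂P,
      (if t ≤ min (T ω) (C ω) then (1:ℝ) else 0) / K t - g t
        + ((if C ω < T ω then (1:ℝ) else 0) * (if C ω ≤ t then (1:ℝ) else 0) * g t
            / (K (C ω) * g (C ω))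
          - ∫ u in (0:ℝ)..(min (min (T ω) (C ω)) t), lam u * g t / (K u * g u))
        = G' (T ω, C ω) := by
    rw [← hmap] at haeEq
    exact ae_of_ae_map hpairMeas.aemeasurable haeEq
  have key : ∀ a i X : ℝ, a * i / (π * K t) - (a - π) / π * g t + a / π * X
      = a / π * (i / K t - g t + X) + g t := by
    intro a i X
    field_simp
    ring
  have hφG : ∀ ω, φ ω
      = A ω / π * ((if t ≤ min (T ω) (C ω) then (1:ℝ) else 0) / K t - g t
          + ((if C ω < T ω then (1:ℝ) else 0) * (if C ω ≤ t then (1:ℝ) else 0) * g t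
              / (K (C ω) * g (C ω))
            - ∫ u in (0:ℝ)..(min (min (T ω) (C ω)) t), lam u * g t / (K u * g u)))
        + g t := by
    intro ω
    rw [hφ ω, hU ω]
    exact key _ _ _
  set ψ : Ω → ℝ := fun ω => A ω / π * G' (T ω, C ω) + g t with hψdef
  have hφψ : φ =ᵐ[P] ψ := by
    filter_upwards [haeEqP] with ω hω
    rw [hφG ω, hψdef, hω]
  have hψmeas : Measurable ψ :=
    ((hAmeas.div_const π).mul (hG'meas.comp hpairMeas)).add measurable_const
  have hA1 : ∀ ω, ‖A ω‖ ≤ 1 := by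
    intro ω
    rcases hA01 ω with h | h <;> rw [h] <;> simp
  have hψb : ∀ ω, ‖ψ ω‖ ≤ B / π + ‖g t‖ := by
    intro ω
    calc ‖ψ ω‖ ≤ ‖A ω / π * G' (T ω, C ω)‖ + ‖g t‖ := norm_add_le _ _
      _ ≤ B / π + ‖g t‖ := by
          apply add_le_add_left
          rw [norm_mul, norm_div]
          have h1 : ‖A ω‖ / ‖π‖ ≤ 1 / π := by
            rw [Real.norm_eq_abs π, abs_of_pos hπpos]
            exact (div_le_div_iff_of_pos_right hπpos).mpr (hA1 ω)
          calc ‖A ω‖ / ‖π‖ * ‖G' (T ω, C ω)‖ ≤ (1 / π) * B :=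
                mul_le_mul h1 (hB _) (norm_nonneg _) (by positivity)
            _ = B / π := by ring
  have hψint : Integrable ψ P :=
    (integrable_const (B / π + ‖g t‖)).mono' hψmeas.aestronglyMeasurable
      (ae_of_all _ hψb)
  have hφint : Integrable φ P := hψint.congr hφψ.symm
  refine ⟨hφint, ?_⟩
  rw [integral_congr_ae hφψ]
  have hGpairInt : Integrable (fun ω => G' (T ω, C ω)) P :=
    (integrable_const B).mono' ((hG'meas.comp hpairMeas).aestronglyMeasurable)
      (ae_of_all _ fun ω => hB _)
  have hAint : Integrable A P :=
    (integrable_const (1:ℝ)).mono' hAmeas.aestronglyMeasurable (ae_of_all _ hA1)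
  have hindep2 : IndepFun A (fun ω => G' (T ω, C ω)) P := by
    have h := hAindep.comp (measurable_id : Measurable (id : ℝ → ℝ)) hG'meas
    exact h
  have hprodint : ∫ ω, A ω * G' (T ω, C ω) ∂P
      = (∫ ω, A ω ∂P) * ∫ ω, G' (T ω, C ω) ∂P := by
    have h := hindep2.integral_mul_eq_mul_integral hAint.aestronglyMeasurable hGpairInt.aestronglyMeasurable
    have h2 : (A * fun ω => G' (T ω, C ω)) = fun ω => A ω * G' (T ω, C ω) := rfl
    rw [h2] at h
    exact h
  have hintA : ∫ ω, A ω ∂P = π := by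
    have hsA : MeasurableSet {ω | A ω = 1} := hAmeas (measurableSet_singleton 1)
    have hAeq : A = ({ω | A ω = 1}).indicator (fun _ => (1:ℝ)) := by
      funext ω
      rcases hA01 ω with h | h
      · rw [Set.indicator_of_notMem (by simp [Set.mem_setOf_eq, h]), h]
      · rw [Set.indicator_of_mem (show ω ∈ {ω | A ω = 1} from h), h]
    rw [hAeq, integral_indicator_const _ hsA, smul_eq_mul, mul_one]
    exact hπ.symm
  have hintG : ∫ ω, G' (T ω, C ω) ∂P = (μ (Set.Ici t)).toReal - g t := by
    rw [← hIntEq, ← hmap]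
    exact (integral_map hpairMeas.aemeasurable hG'meas.aestronglyMeasurable).symm
  have hint2 : Integrable (fun ω => A ω * G' (T ω, C ω)) P :=
    hGpairInt.bdd_mul hAmeas.aestronglyMeasurable (ae_of_all _ hA1)
  have hsplitψ : ∫ ω, ψ ω ∂P = π⁻¹ * ∫ ω, A ω * G' (T ω, C ω) ∂P + g t := by
    have h1 : ψ = fun ω => π⁻¹ * (A ω * G' (T ω, C ω)) + g t := by
      funext ω
      simp only [hψdef]
      ring
    have hconst : ∫ _ω, (g t : ℝ) ∂P = g t := by simp
    rw [h1, integral_add (hint2.const_mul π⁻¹) (integrable_const _), integral_const_mul, hconst]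
  rw [hsplitψ, hprodint, hintA, hintG, hIciT t, inv_mul_cancel_left₀ hπne, sub_add_cancel]
end

section
/- (Marginal hazard of a frailty model, equation (frailty_marginal_t).) The marginal survival value φ(t) is strictly positive, and the function s ↦ −log φ(s) is differentiable at t with derivative equal to ( ∫ x e^{−x Λ(t)} dμ(x) / φ(t) ) · Λ′(t); that is, the marginal hazard at t equals the posterior mean of the frailty among survivors at time t multiplied by the derivative of the cumulative hazard. -/
open MeasureTheory

/-- **Marginal hazard of a frailty model** (equation (frailty_marginal_t)).
Let `μ` be the law of a nonnegative frailty, `Λ` a cumulative hazard with derivative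
`Λ'` at `t` and `Λ(t) > 0`, and `φ(s) = ∫ e^{−xΛ(s)} dμ(x)` the marginal survival
function.  Then `φ(t) > 0` and `s ↦ −log φ(s)` is differentiable at `t` with derivative
`(∫ x e^{−xΛ(t)} dμ(x) / φ(t)) · Λ'(t)`: the marginal hazard equals the posterior mean of
the frailty among survivors times the derivative of the cumulative hazard. -/
theorem frailty_marginal_hazard
    (μ : Measure ℝ) [IsProbabilityMeasure μ] (hμ : μ (Set.Iio 0) = 0)
    (Λ : ℝ → ℝ) (hΛ0 : ∀ s : ℝ, 0 ≤ Λ s)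
    (t Λ' : ℝ) (hΛ' : HasDerivAt Λ Λ' t) (hΛt : 0 < Λ t)
    (φ : ℝ → ℝ) (hφ : ∀ s : ℝ, φ s = ∫ x, Real.exp (-(x * Λ s)) ∂μ) :
    0 < φ t ∧
      HasDerivAt (fun s => -Real.log (φ s))
        (((∫ x, x * Real.exp (-(x * Λ t)) ∂μ) / φ t) * Λ') t := by
  have hae : ∀ᵐ x ∂μ, 0 ≤ x := by
    rw [ae_iff]
    convert hμ using 2
    ext x
    simp [Set.Iio, not_le]
  -- Integrability of the integrand at Λ t
  have hint : Integrable (fun x => Real.exp (-(x * Λ t))) μ := by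
    refine Integrable.mono' (integrable_const 1)
      ((Real.continuous_exp.comp (by continuity)).aestronglyMeasurable) ?_
    filter_upwards [hae] with x hx
    rw [Real.norm_eq_abs, abs_of_pos (Real.exp_pos _)]
    exact Real.exp_le_one_iff.mpr (by nlinarith [hΛ0 t])
  -- Positivity of φ t
  have hφt : 0 < φ t := by
    rw [hφ t]
    refine (integral_pos_iff_support_of_nonneg_ae ?_ hint).mpr ?_
    · filter_upwards with x using (Real.exp_pos _).le
    · have : (Function.support fun x => Real.exp (-(x * Λ t))) = Set.univ := by
        ext x; simp [Function.support, (Real.exp_pos _).ne']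
      rw [this]; simp
  refine ⟨hφt, ?_⟩
  -- Derivative of ψ u = ∫ exp(-(x*u)) dμ at u = Λ t
  set c : ℝ := Λ t / 2 with hc
  have hcpos : 0 < c := by positivity
  have key : HasDerivAt (fun u => ∫ x, Real.exp (-(x * u)) ∂μ)
      (∫ x, -(x * Real.exp (-(x * Λ t))) ∂μ) (Λ t) := by
    have := hasDerivAt_integral_of_dominated_loc_of_deriv_le (μ := μ)
      (F := fun u x => Real.exp (-(x * u)))
      (F' := fun u x => -(x * Real.exp (-(x * u))))
      (x₀ := Λ t) (bound := fun _ => 1 / c) (s := Metric.ball (Λ t) c) (Metric.ball_mem_nhds _ hcpos)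
      ?_ hint ?_ ?_ (integrable_const _) ?_
    · exact this.2
    · filter_upwards with u
      exact ((Real.continuous_exp.comp (by continuity)).aestronglyMeasurable)
    · exact ((by continuity : Continuous fun x : ℝ => -(x * Real.exp (-(x * Λ t))))).aestronglyMeasurable
    · filter_upwards [hae] with x hx
      intro u hu
      have hu' : c < u := by
        rw [Metric.mem_ball, Real.dist_eq, abs_lt] at hu
        linarith
      have h1 : ‖-(x * Real.exp (-(x * u)))‖ = x * Real.exp (-(x * u)) := by
        rw [norm_neg, Real.norm_eq_abs, abs_of_nonneg (by positivity)]
      rw [h1]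
      -- x * exp(-(x*u)) ≤ x * exp(-(x*c)) ≤ 1/c
      have h2 : x * Real.exp (-(x * u)) ≤ x * Real.exp (-(x * c)) := by
        apply mul_le_mul_of_nonneg_left _ hx
        apply Real.exp_le_exp.mpr
        nlinarith
      have h3 : x * Real.exp (-(x * c)) ≤ 1 / c := by
        rcases eq_or_lt_of_le hx with h | h
        · rw [← h]; simp; positivity
        · have hxc : x * c ≤ Real.exp (x * c) := by
            nlinarith [Real.add_one_le_exp (x * c)]
          rw [Real.exp_neg]
          calc x * (Real.exp (x * c))⁻¹ ≤ x * (x * c)⁻¹ := by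
                gcongr
            _ = 1 / c := by field_simp
      exact h2.trans h3
    · filter_upwards with x
      intro u hu
      have : HasDerivAt (fun u => -(x * u)) (-x) u := by
        simpa using (hasDerivAt_id u).const_mul (-x)
      refine ((Real.hasDerivAt_exp (-(x * u))).comp u this).congr_deriv ?_
      ring
  -- φ = ψ ∘ Λ
  have hφeq : φ = fun s => ∫ x, Real.exp (-(x * Λ s)) ∂μ := funext hφ
  have hφd : HasDerivAt φ ((∫ x, -(x * Real.exp (-(x * Λ t))) ∂μ) * Λ') t := by
    rw [hφeq]
    exact key.comp t hΛ'
  have hlog : HasDerivAt (fun s => Real.log (φ s))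
      (((∫ x, -(x * Real.exp (-(x * Λ t))) ∂μ) * Λ') / φ t) t :=
    hφd.log hφt.ne'
  have := hlog.neg
  convert this using 1
  · rfl
  · rfl
  · rfl
  rw [integral_neg]
  field_simp
  rw [mul_comm Λ']
  congr 1
  congr 1
  ext a
  rw [mul_comm (Λ t)]
end
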